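/- arXiv:0909.2382 — 12 statements merged into one kernel-verified Lean document; each statement's English description precedes it below -/
import Mathlib

section
/- The McGehee matrix Ã acts as a rotation by π/2 on the center-of-mass plane Q with respect to the mass inner product: for all q, q' ∈ Q one has (i) Ãq ∈ Q, (ii) (Ãq)ᵀM(Ãq') = qᵀMq', (iii) qᵀM(Ãq) = 0, and (iv) Ã(Ãq) = −q. -/
open Real Matrix

/-- The McGehee matrix `Ã` acts as a rotation by `π/2` on the
center-of-mass plane `Q` with respect to the mass inner product: for `q, q' ∈ Q`,
(i) `Ãq ∈ Q`, (ii) `(Ãq)ᵀM(Ãq') = qᵀMq'`, (iii) `qᵀM(Ãq) = 0`, (iv) `Ã(Ãq) = −q`. -/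
theorem mcgehee_matrix_rotation
    (m1 m2 m3 : ℝ) (hm1 : 0 < m1) (hm2 : 0 < m2) (hm3 : 0 < m3)
    (M A1 A2 At : Matrix (Fin 3) (Fin 3) ℝ)
    (hM : M = Matrix.diagonal ![m1, m2, m3])
    (hA1 : A1 = Matrix.of fun _ _ => (1 : ℝ))
    (hA2 : A2 = !![0, 1, -1; -1, 0, 1; 1, -1, 0])
    (hAt : At = (1 / (m1 + m2 + m3)) • (A1 * M)
            + Real.sqrt (m1 * m2 * m3 / (m1 + m2 + m3)) • (M⁻¹ * A2)) :
    ∀ q q' : Fin 3 → ℝ,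
      m1 * q 0 + m2 * q 1 + m3 * q 2 = 0 →
      m1 * q' 0 + m2 * q' 1 + m3 * q' 2 = 0 →
      (m1 * At.mulVec q 0 + m2 * At.mulVec q 1 + m3 * At.mulVec q 2 = 0) ∧
      (At.mulVec q) ⬝ᵥ M.mulVec (At.mulVec q') = q ⬝ᵥ M.mulVec q' ∧
      q ⬝ᵥ M.mulVec (At.mulVec q) = 0 ∧
      At.mulVec (At.mulVec q) = -q := by
  intro q q' hq hq'
  have hm : (0:ℝ) < m1 + m2 + m3 := by positivity
  set s := Real.sqrt (m1 * m2 * m3 / (m1 + m2 + m3)) with hs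
  have hs2 : s * s = m1 * m2 * m3 / (m1 + m2 + m3) :=
    Real.mul_self_sqrt (by positivity)
  have hs2c : (m1 + m2 + m3) * (s * s) = m1 * m2 * m3 := by
    rw [hs2]; field_simp
  have hinv : (Matrix.diagonal ![m1, m2, m3])⁻¹ = Matrix.diagonal ![m1⁻¹, m2⁻¹, m3⁻¹] := by
    apply Matrix.inv_eq_right_inv
    rw [Matrix.diagonal_mul_diagonal]
    have h1 : (fun i => ![m1, m2, m3] i * ![m1⁻¹, m2⁻¹, m3⁻¹] i) = fun _ => (1:ℝ) := by
      funext i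
      fin_cases i <;> simp [mul_inv_cancel₀, hm1.ne', hm2.ne', hm3.ne']
    rw [h1, ← Matrix.diagonal_one]
  have key : ∀ v : Fin 3 → ℝ, m1 * v 0 + m2 * v 1 + m3 * v 2 = 0 →
      (m1 * At.mulVec v 0 = s * (v 1 - v 2)) ∧
      (m2 * At.mulVec v 1 = s * (v 2 - v 0)) ∧
      (m3 * At.mulVec v 2 = s * (v 0 - v 1)) := by
    intro v hv
    have hv2 : v 2 = (-(m1 * v 0) - m2 * v 1) / m3 := by
      field_simp
      linarith
    rw [hAt, hM, hA1, hA2, hinv]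
    refine ⟨?_, ?_, ?_⟩ <;>
    · simp [Matrix.mulVec, dotProduct, Fin.sum_univ_three, Matrix.mul_apply,
        Matrix.diagonal_apply, Matrix.add_apply, Matrix.smul_apply]
      rw [hv2]
      field_simp
      ring
  obtain ⟨h0, h1, h2⟩ := key q hq
  obtain ⟨h0', h1', h2'⟩ := key q' hq'
  have g1 : m1 * At.mulVec q 0 + m2 * At.mulVec q 1 + m3 * At.mulVec q 2 = 0 := by
    linear_combination h0 + h1 + h2
  obtain ⟨k0, k1, k2⟩ := key (At.mulVec q) g1
  have hprod : (m1 * m2 * m3 : ℝ) ≠ 0 := by positivity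
  refine ⟨g1, ?_, ?_, ?_⟩
  · rw [hM]
    simp only [dotProduct, Matrix.mulVec_diagonal, Fin.sum_univ_three,
      Matrix.cons_val_zero, Matrix.cons_val_one, Matrix.head_cons,
      Matrix.cons_val_two, Matrix.tail_cons]
    apply mul_left_cancel₀ hprod
    linear_combination
      m2 * m3 * (m1 * At.mulVec q 0) * h0' + m2 * m3 * s * (q' 1 - q' 2) * h0 +
      m1 * m3 * (m2 * At.mulVec q 1) * h1' + m1 * m3 * s * (q' 2 - q' 0) * h1 +
      m1 * m2 * (m3 * At.mulVec q 2) * h2' + m1 * m2 * s * (q' 0 - q' 1) * h2 +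
      (q 0 * (m1 * q' 0) + q 1 * (m2 * q' 1) + q 2 * (m3 * q' 2)) * hs2c -
      s * s * (m1 * q' 0 + m2 * q' 1 + m3 * q' 2) * hq
  · rw [hM]
    simp only [dotProduct, Matrix.mulVec_diagonal, Fin.sum_univ_three,
      Matrix.cons_val_zero, Matrix.cons_val_one, Matrix.head_cons,
      Matrix.cons_val_two, Matrix.tail_cons]
    linear_combination q 0 * h0 + q 1 * h1 + q 2 * h2
  · funext i
    fin_cases i
    · show At.mulVec (At.mulVec q) 0 = -q 0
      apply mul_left_cancel₀ hprod
      linear_combination m2 * m3 * k0 + m3 * s * h1 - m2 * s * h2 + s * s * hq - q 0 * hs2c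
    · show At.mulVec (At.mulVec q) 1 = -q 1
      apply mul_left_cancel₀ hprod
      linear_combination m1 * m3 * k1 + m1 * s * h2 - m3 * s * h0 + s * s * hq - q 1 * hs2c
    · show At.mulVec (At.mulVec q) 2 = -q 2
      apply mul_left_cancel₀ hprod
      linear_combination m1 * m2 * k2 + m2 * s * h0 - m1 * s * h1 + s * s * hq - q 2 * hs2c
end

section
/- The double-collision configurations c and d lie on the unit sphere of the moment-of-inertia norm and satisfy 0 < cᵀMd < 1: one has c ∈ Q, d ∈ Q, cᵀMc = 1, dᵀMd = 1, and 0 < cᵀMd < 1. In particular there is a unique λ ∈ (0, π/4) with cos(2λ) = cᵀMd. -/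
/-!
Each of `c`, `d` is a two-cluster configuration: bodies of total mass `a` sit at
`-√(b / (a s))` and bodies of total mass `b` at `√(a / (b s))`, where `s = a + b`. Such a
configuration is balanced and has unit moment of inertia (`c`: `a = m₁ + m₂`, `b = m₃`;
`d`: `a = m₂ + m₃`, `b = m₁`). Splitting every square root into square roots of masses turns
`cᵀMd` into `√(m₁m₃ / ((m₁ + m₂)(m₂ + m₃)))`, which lies in `(0, 1)` since
`m₁m₃ < (m₁ + m₂)(m₂ + m₃)`; then `λ = arccos (cᵀMd) / 2`.
-/

open Real Matrix

lemma dotProduct_diagonal_mulVec_fin_three {R : Type*} [CommSemiring R] (w u v : Fin 3 → R) :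
    u ⬝ᵥ diagonal w *ᵥ v = w 0 * u 0 * v 0 + w 1 * u 1 * v 1 + w 2 * u 2 * v 2 := by
  simp only [dotProduct, mulVec_diagonal, Fin.sum_univ_three]
  ring

section TwoClusters

variable {a b s : ℝ}

lemma two_cluster_balance (ha : 0 < a) (hb : 0 < b) (hs : a + b = s) :
    a * √(b / (a * s)) = b * √(a / (b * s)) := by
  subst hs
  simp (disch := positivity) only [Real.sqrt_div', Real.sqrt_mul']
  have hsa := Real.sq_sqrt ha.le
  have hsb := Real.sq_sqrt hb.le
  field_simp
  linear_combination a * hsb - b * hsa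

lemma two_cluster_inertia (ha : 0 < a) (hb : 0 < b) (hs : a + b = s) :
    a * √(b / (a * s)) ^ 2 + b * √(a / (b * s)) ^ 2 = 1 := by
  subst hs
  rw [Real.sq_sqrt (by positivity), Real.sq_sqrt (by positivity)]
  field_simp
  ring

end TwoClusters

lemma double_collision_inner_eq_sqrt {m1 m2 m3 : ℝ} (hm1 : 0 < m1) (hm2 : 0 < m2) (hm3 : 0 < m3) :
    m1 * -√(m3 / ((m1 + m2) * (m1 + m2 + m3))) * -√((m2 + m3) / (m1 * (m1 + m2 + m3)))
      + m2 * -√(m3 / ((m1 + m2) * (m1 + m2 + m3))) * √(m1 / ((m2 + m3) * (m1 + m2 + m3)))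
      + m3 * √((m1 + m2) / (m3 * (m1 + m2 + m3))) * √(m1 / ((m2 + m3) * (m1 + m2 + m3)))
      = √(m1 * m3 / ((m1 + m2) * (m2 + m3))) := by
  simp (disch := positivity) only [Real.sqrt_div', Real.sqrt_mul']
  have h1 := Real.sq_sqrt hm1.le
  have h3 := Real.sq_sqrt hm3.le
  have h12 := Real.sq_sqrt (by positivity : (0:ℝ) ≤ m1 + m2)
  have h23 := Real.sq_sqrt (by positivity : (0:ℝ) ≤ m2 + m3)
  have hs := Real.sq_sqrt (by positivity : (0:ℝ) ≤ m1 + m2 + m3)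
  field_simp
  rw [h1, h3, h12, h23, hs]
  ring

lemma sqrt_mul_div_add_mul_add_mem_Ioo {a b c : ℝ} (ha : 0 < a) (hb : 0 < b) (hc : 0 < c) :
    √(a * c / ((a + b) * (b + c))) ∈ Set.Ioo 0 1 := by
  refine ⟨Real.sqrt_pos.2 (by positivity), (Real.sqrt_lt' one_pos).2 ?_⟩
  rw [one_pow, div_lt_one (by positivity)]
  nlinarith [mul_pos ha hb, mul_pos hb hc, mul_pos hb hb]

theorem existsUnique_cos_two_mul_eq {x : ℝ} (hx0 : 0 < x) (hx1 : x < 1) :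
    ∃! lam : ℝ, lam ∈ Set.Ioo 0 (π / 4) ∧ cos (2 * lam) = x := by
  refine ⟨arccos x / 2, ⟨⟨?_, ?_⟩, ?_⟩, ?_⟩
  · exact div_pos (arccos_pos.2 hx1) two_pos
  · linarith [arccos_lt_pi_div_two.2 hx0]
  · rw [mul_div_cancel₀ _ two_ne_zero, cos_arccos (by linarith) hx1.le]
  · rintro lam ⟨⟨hlam0, hlam1⟩, hcos⟩
    have harccos := arccos_cos (x := 2 * lam) (by linarith) (by linarith [pi_pos])
    rw [hcos] at harccos
    linarith

/-- The double-collision configurations `c` and `d` lie on the unit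
sphere of the moment-of-inertia norm, satisfy `0 < cᵀMd < 1`, and there is a unique
`λ ∈ (0, π/4)` with `cos(2λ) = cᵀMd`. -/
theorem double_collision_configurations
    (m1 m2 m3 : ℝ) (hm1 : 0 < m1) (hm2 : 0 < m2) (hm3 : 0 < m3)
    (M : Matrix (Fin 3) (Fin 3) ℝ) (hM : M = Matrix.diagonal ![m1, m2, m3])
    (c d : Fin 3 → ℝ)
    (hc : c = ![-Real.sqrt (m3 / ((m1 + m2) * (m1 + m2 + m3))),
                -Real.sqrt (m3 / ((m1 + m2) * (m1 + m2 + m3))),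
                Real.sqrt ((m1 + m2) / (m3 * (m1 + m2 + m3)))])
    (hd : d = ![-Real.sqrt ((m2 + m3) / (m1 * (m1 + m2 + m3))),
                Real.sqrt (m1 / ((m2 + m3) * (m1 + m2 + m3))),
                Real.sqrt (m1 / ((m2 + m3) * (m1 + m2 + m3)))]) :
    (m1 * c 0 + m2 * c 1 + m3 * c 2 = 0) ∧
    (m1 * d 0 + m2 * d 1 + m3 * d 2 = 0) ∧
    c ⬝ᵥ M.mulVec c = 1 ∧
    d ⬝ᵥ M.mulVec d = 1 ∧
    0 < c ⬝ᵥ M.mulVec d ∧ c ⬝ᵥ M.mulVec d < 1 ∧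
    (∃! lam : ℝ, lam ∈ Set.Ioo 0 (Real.pi / 4) ∧
      Real.cos (2 * lam) = c ⬝ᵥ M.mulVec d) := by
  have hm12 : 0 < m1 + m2 := by positivity
  have hm23 : 0 < m2 + m3 := by positivity
  have hs : m2 + m3 + m1 = m1 + m2 + m3 := by ring
  subst hM hc hd
  simp only [dotProduct_diagonal_mulVec_fin_three, cons_val_zero, cons_val_one, cons_val_two,
    head_cons, tail_cons]
  rw [double_collision_inner_eq_sqrt hm1 hm2 hm3]
  obtain ⟨hpos, hlt1⟩ := sqrt_mul_div_add_mul_add_mem_Ioo hm1 hm2 hm3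
  refine ⟨?_, ?_, ?_, ?_, hpos, hlt1, existsUnique_cos_two_mul_eq hpos hlt1⟩
  · linear_combination -two_cluster_balance hm12 hm3 rfl
  · linear_combination two_cluster_balance hm23 hm1 hs
  · linear_combination two_cluster_inertia hm12 hm3 rfl
  · linear_combination two_cluster_inertia hm23 hm1 hs
end

section
/- The McGehee parametrization S of the arc of collinear configurations satisfies: for every s ∈ [−1,1], (i) S(s) ∈ Q and S(s)ᵀM S(s) = 1; (ii) S(−1) = c and S(1) = d; (iii) the separations are S₂(s) − S₁(s) = (d₂ − d₁)·sin(λ(1+s))/sin(2λ) and S₃(s) − S₂(s) = (c₃ − c₂)·sin(λ(1−s))/sin(2λ), so in particular S₁(s) ≤ S₂(s) ≤ S₃(s) with equality only at s = −1 resp. s = 1; and (iv) S is real analytic with S'(s) = λ·Ã·S(s). -/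
/-!
The collision configurations `c` (where `q₁ = q₂`) and `d` (where `q₂ = q₃`) are unit vectors of
the mass inner product `uᵀ M v` in the plane `Q`, at angle `2λ` from each other, and `S` is the
spherical interpolation between them along the unit circle of `Q`. This gives (i) and (ii); since
`c₁ = c₂` and `d₂ = d₃`, each separation sees only one of the two sine weights, which gives (iii).
On `Q` the term `A₁ M` of `Ã` vanishes and `Ã` is the infinitesimal rotation of that circle, taking
`c` to `(d - cos 2λ • c) / sin 2λ` and `d` to `(cos 2λ • d - c) / sin 2λ`; differentiating the
sine weights then gives `S' = λ Ã S`.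
-/

open Real Matrix

theorem sin_sq_add_sin_sq_add_two_mul_cos_add (a b : ℝ) :
    sin a ^ 2 + sin b ^ 2 + 2 * cos (a + b) * sin a * sin b = sin (a + b) ^ 2 := by
  rw [sin_add, cos_add]
  linear_combination -sin a ^ 2 * sin_sq_add_cos_sq b - sin b ^ 2 * sin_sq_add_cos_sq a

noncomputable def arcParam {E : Type*} [AddCommGroup E] [Module ℝ E] (lam : ℝ) (c d : E) (s : ℝ) :
    E :=
  (sin (2 * lam))⁻¹ • (sin (lam * (1 - s)) • c + sin (lam * (1 + s)) • d)

section Module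

variable {E : Type*} [AddCommGroup E] [Module ℝ E] {lam : ℝ} {c d : E}

theorem arcParam_neg_one (h : sin (2 * lam) ≠ 0) : arcParam lam c d (-1) = c := by
  rw [arcParam, show lam * (1 - -1) = 2 * lam by ring, show lam * (1 + -1) = 0 by ring]
  simp [smul_smul, h]

theorem arcParam_one (h : sin (2 * lam) ≠ 0) : arcParam lam c d 1 = d := by
  rw [arcParam, show lam * (1 + 1) = 2 * lam by ring, show lam * (1 - 1) = 0 by ring]
  simp [smul_smul, h]

theorem arcParam_apply {ι : Type*} (lam : ℝ) (c d : ι → ℝ) (s : ℝ) (i : ι) :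
    arcParam lam c d s i =
      (sin (2 * lam))⁻¹ * (sin (lam * (1 - s)) * c i + sin (lam * (1 + s)) * d i) := by
  simp [arcParam]

theorem arcParam_apply_sub_of_left_eq {ι : Type*} {c d : ι → ℝ} {i j : ι} (h : c i = c j)
    (s : ℝ) : arcParam lam c d s j - arcParam lam c d s i =
      (d j - d i) * sin (lam * (1 + s)) / sin (2 * lam) := by
  rw [arcParam_apply, arcParam_apply, h]
  ring

theorem arcParam_apply_sub_of_right_eq {ι : Type*} {c d : ι → ℝ} {i j : ι} (h : d i = d j)
    (s : ℝ) : arcParam lam c d s j - arcParam lam c d s i =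
      (c j - c i) * sin (lam * (1 - s)) / sin (2 * lam) := by
  rw [arcParam_apply, arcParam_apply, h]
  ring

theorem bilin_arcParam_self (B : LinearMap.BilinForm ℝ E) (s : ℝ)
    (hc : B c c = 1) (hd : B d d = 1) (hcd : B c d = cos (2 * lam)) (hdc : B d c = cos (2 * lam))
    (h : sin (2 * lam) ≠ 0) : B (arcParam lam c d s) (arcParam lam c d s) = 1 := by
  have key := sin_sq_add_sin_sq_add_two_mul_cos_add (lam * (1 - s)) (lam * (1 + s))
  rw [show lam * (1 - s) + lam * (1 + s) = 2 * lam by ring] at key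
  simp only [arcParam, map_smul, map_add, LinearMap.smul_apply, LinearMap.add_apply, hc, hd, hcd,
    hdc, smul_eq_mul]
  field_simp
  linear_combination key

theorem smul_map_arcParam (T : E →ₗ[ℝ] E) (s : ℝ) (h : sin (2 * lam) ≠ 0)
    (hTc : sin (2 * lam) • T c = d - cos (2 * lam) • c)
    (hTd : sin (2 * lam) • T d = cos (2 * lam) • d - c) :
    lam • T (arcParam lam c d s) =
      (sin (2 * lam))⁻¹ • ((-lam * cos (lam * (1 - s))) • c + (lam * cos (lam * (1 + s))) • d) := by
  have h1 : sin (lam * (1 + s)) =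
      sin (2 * lam) * cos (lam * (1 - s)) - cos (2 * lam) * sin (lam * (1 - s)) := by
    rw [show lam * (1 + s) = 2 * lam - lam * (1 - s) by ring, sin_sub]
  have h2 : sin (lam * (1 - s)) =
      sin (2 * lam) * cos (lam * (1 + s)) - cos (2 * lam) * sin (lam * (1 + s)) := by
    rw [show lam * (1 - s) = 2 * lam - lam * (1 + s) by ring, sin_sub]
  have hTc' : T c = (sin (2 * lam))⁻¹ • (d - cos (2 * lam) • c) := by
    rw [← hTc, smul_smul, inv_mul_cancel₀ h, one_smul]
  have hTd' : T d = (sin (2 * lam))⁻¹ • (cos (2 * lam) • d - c) := by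
    rw [← hTd, smul_smul, inv_mul_cancel₀ h, one_smul]
  rw [arcParam, map_smul, map_add, map_smul, map_smul, hTc', hTd']
  generalize sin (2 * lam) = p at *
  generalize cos (2 * lam) = e at *
  match_scalars
  · field_simp
    linear_combination lam * h2
  · field_simp
    linear_combination -lam * h1

end Module

section Normed

variable {E : Type*} [NormedAddCommGroup E] [NormedSpace ℝ E] (lam : ℝ) (c d : E) (s : ℝ)

theorem hasDerivAt_arcParam :
    HasDerivAt (arcParam lam c d)
      ((sin (2 * lam))⁻¹ • ((-lam * cos (lam * (1 - s))) • c + (lam * cos (lam * (1 + s))) • d))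
      s := by
  have hx : HasDerivAt (fun t => sin (lam * (1 - t))) (-lam * cos (lam * (1 - s))) s := by
    simpa [mul_comm] using ((hasDerivAt_id s).const_sub 1 |>.const_mul lam).sin
  have hy : HasDerivAt (fun t => sin (lam * (1 + t))) (lam * cos (lam * (1 + s))) s := by
    simpa [mul_comm] using ((hasDerivAt_id s).const_add 1 |>.const_mul lam).sin
  exact ((hx.smul_const c).add (hy.smul_const d)).const_smul _

theorem analyticAt_arcParam : AnalyticAt ℝ (arcParam lam c d) s := by
  unfold arcParam
  fun_prop

theorem hasDerivAt_arcParam_of_smul_map (T : E →ₗ[ℝ] E) (h : sin (2 * lam) ≠ 0)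
    (hTc : sin (2 * lam) • T c = d - cos (2 * lam) • c)
    (hTd : sin (2 * lam) • T d = cos (2 * lam) • d - c) :
    HasDerivAt (arcParam lam c d) (lam • T (arcParam lam c d s)) s :=
  smul_map_arcParam T s h hTc hTd ▸ hasDerivAt_arcParam lam c d s

end Normed

theorem le_and_eq_iff_of_sub_eq_mul_sin {x y K p lam t : ℝ} (hK : 0 < K) (hp : 0 < p)
    (hlam : 0 < lam) (hlam' : 2 * lam < π) (ht : t ∈ Set.Icc 0 2)
    (h : y - x = K * sin (lam * t) / p) : x ≤ y ∧ (x = y ↔ t = 0) := by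
  rcases ht.1.eq_or_lt with rfl | ht0
  · simp only [mul_zero, sin_zero, zero_div] at h
    exact ⟨by linarith, by simp only [iff_true]; linarith⟩
  · have hsin : 0 < sin (lam * t) := sin_pos_of_pos_of_lt_pi (by positivity) (by nlinarith [ht.2])
    have hxy : 0 < y - x := h ▸ by positivity
    exact ⟨by linarith, ⟨fun _ => by linarith, fun _ => by linarith⟩⟩

theorem sqrt_div_mul_eq_div_mul_sqrt {a b : ℝ} (ha : 0 < a) (hb : 0 < b) (x : ℝ) :
    √(a / (b * x)) = a / b * √(b / (a * x)) := by
  rw [show a / (b * x) = (a / b) ^ 2 * (b / (a * x)) by field_simp, sqrt_mul (by positivity),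
    sqrt_sq (by positivity)]

theorem mul_sq_sqrt_div {a b : ℝ} (ha : 0 < a) (hb : 0 ≤ b) : a * √(b / a) ^ 2 = b := by
  rw [sq_sqrt (by positivity)]
  field_simp

section ThreeBody

/- The configurations `c`, `d` and the matrix `Ã` of the statement. -/
noncomputable def collision12 (m1 m2 m3 : ℝ) : Fin 3 → ℝ :=
  ![-√(m3 / ((m1 + m2) * (m1 + m2 + m3))), -√(m3 / ((m1 + m2) * (m1 + m2 + m3))),
    √((m1 + m2) / (m3 * (m1 + m2 + m3)))]

noncomputable def collision23 (m1 m2 m3 : ℝ) : Fin 3 → ℝ :=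
  ![-√((m2 + m3) / (m1 * (m1 + m2 + m3))), √(m1 / ((m2 + m3) * (m1 + m2 + m3))),
    √(m1 / ((m2 + m3) * (m1 + m2 + m3)))]

noncomputable def mcgeheeMatrix (m1 m2 m3 : ℝ) : Matrix (Fin 3) (Fin 3) ℝ :=
  (1 / (m1 + m2 + m3)) • ((Matrix.of fun _ _ => (1 : ℝ)) * diagonal ![m1, m2, m3])
    + √(m1 * m2 * m3 / (m1 + m2 + m3)) •
      ((diagonal ![m1, m2, m3])⁻¹ * !![0, 1, -1; -1, 0, 1; 1, -1, 0])

theorem collision12_zero_eq_one (m1 m2 m3 : ℝ) :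
    collision12 m1 m2 m3 0 = collision12 m1 m2 m3 1 := rfl

theorem collision23_one_eq_two (m1 m2 m3 : ℝ) :
    collision23 m1 m2 m3 1 = collision23 m1 m2 m3 2 := rfl

variable {m1 m2 m3 : ℝ}

theorem vec3_dotProduct_diagonal_mulVec (v w : Fin 3 → ℝ) :
    v ⬝ᵥ diagonal ![m1, m2, m3] *ᵥ w = m1 * v 0 * w 0 + m2 * v 1 * w 1 + m3 * v 2 * w 2 := by
  simp only [dotProduct, mulVec_diagonal, Fin.sum_univ_three, cons_val_zero, cons_val_one, cons_val]
  ring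

theorem collision12_eq (hm1 : 0 < m1) (hm2 : 0 < m2) (hm3 : 0 < m3) :
    collision12 m1 m2 m3 = ![-√(m3 / ((m1 + m2) * (m1 + m2 + m3))),
      -√(m3 / ((m1 + m2) * (m1 + m2 + m3))),
      (m1 + m2) / m3 * √(m3 / ((m1 + m2) * (m1 + m2 + m3)))] := by
  rw [collision12, sqrt_div_mul_eq_div_mul_sqrt (by positivity) hm3]

theorem collision23_eq (hm1 : 0 < m1) (hm2 : 0 < m2) (hm3 : 0 < m3) :
    collision23 m1 m2 m3 = ![-((m2 + m3) / m1 * √(m1 / ((m2 + m3) * (m1 + m2 + m3)))),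
      √(m1 / ((m2 + m3) * (m1 + m2 + m3))), √(m1 / ((m2 + m3) * (m1 + m2 + m3)))] := by
  rw [collision23, sqrt_div_mul_eq_div_mul_sqrt (by positivity) hm1]

theorem mass_moment_collision12 (hm1 : 0 < m1) (hm2 : 0 < m2) (hm3 : 0 < m3) :
    m1 * collision12 m1 m2 m3 0 + m2 * collision12 m1 m2 m3 1 + m3 * collision12 m1 m2 m3 2 =
      0 := by
  rw [collision12_eq hm1 hm2 hm3]
  simp only [cons_val_zero, cons_val_one, cons_val]
  field_simp
  ring

theorem mass_moment_collision23 (hm1 : 0 < m1) (hm2 : 0 < m2) (hm3 : 0 < m3) :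
    m1 * collision23 m1 m2 m3 0 + m2 * collision23 m1 m2 m3 1 + m3 * collision23 m1 m2 m3 2 =
      0 := by
  rw [collision23_eq hm1 hm2 hm3]
  simp only [cons_val_zero, cons_val_one, cons_val]
  field_simp
  ring

theorem inertia_collision12 (hm1 : 0 < m1) (hm2 : 0 < m2) (hm3 : 0 < m3) :
    collision12 m1 m2 m3 ⬝ᵥ diagonal ![m1, m2, m3] *ᵥ collision12 m1 m2 m3 = 1 := by
  have hα := mul_sq_sqrt_div (a := (m1 + m2) * (m1 + m2 + m3)) (by positivity) hm3.le
  rw [vec3_dotProduct_diagonal_mulVec, collision12_eq hm1 hm2 hm3]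
  generalize √(m3 / ((m1 + m2) * (m1 + m2 + m3))) = α at *
  simp only [cons_val_zero, cons_val_one, cons_val]
  field_simp
  linear_combination hα

theorem inertia_collision23 (hm1 : 0 < m1) (hm2 : 0 < m2) (hm3 : 0 < m3) :
    collision23 m1 m2 m3 ⬝ᵥ diagonal ![m1, m2, m3] *ᵥ collision23 m1 m2 m3 = 1 := by
  have hδ := mul_sq_sqrt_div (a := (m2 + m3) * (m1 + m2 + m3)) (by positivity) hm1.le
  rw [vec3_dotProduct_diagonal_mulVec, collision23_eq hm1 hm2 hm3]
  generalize √(m1 / ((m2 + m3) * (m1 + m2 + m3))) = δ at *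
  simp only [cons_val_zero, cons_val_one, cons_val]
  field_simp
  linear_combination hδ

theorem collision12_dotProduct_collision23 (hm1 : 0 < m1) (hm2 : 0 < m2) (hm3 : 0 < m3) :
    collision12 m1 m2 m3 ⬝ᵥ diagonal ![m1, m2, m3] *ᵥ collision23 m1 m2 m3 =
      (m1 + m2 + m3) * √(m3 / ((m1 + m2) * (m1 + m2 + m3))) *
        √(m1 / ((m2 + m3) * (m1 + m2 + m3))) := by
  rw [vec3_dotProduct_diagonal_mulVec, collision12_eq hm1 hm2 hm3, collision23_eq hm1 hm2 hm3]
  simp only [cons_val_zero, cons_val_one, cons_val]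
  field_simp
  ring

theorem collision23_dotProduct_collision12 :
    collision23 m1 m2 m3 ⬝ᵥ diagonal ![m1, m2, m3] *ᵥ collision12 m1 m2 m3 =
      collision12 m1 m2 m3 ⬝ᵥ diagonal ![m1, m2, m3] *ᵥ collision23 m1 m2 m3 := by
  simp only [vec3_dotProduct_diagonal_mulVec]
  ring

theorem collision12_one_lt_two (hm1 : 0 < m1) (hm2 : 0 < m2) (hm3 : 0 < m3) :
    collision12 m1 m2 m3 1 < collision12 m1 m2 m3 2 := by
  have : 0 < √((m1 + m2) / (m3 * (m1 + m2 + m3))) := sqrt_pos.2 (by positivity)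
  simp only [collision12, cons_val_one, cons_val]
  linarith [sqrt_nonneg (m3 / ((m1 + m2) * (m1 + m2 + m3)))]

theorem collision23_zero_lt_one (hm1 : 0 < m1) (hm2 : 0 < m2) (hm3 : 0 < m3) :
    collision23 m1 m2 m3 0 < collision23 m1 m2 m3 1 := by
  have : 0 < √(m1 / ((m2 + m3) * (m1 + m2 + m3))) := sqrt_pos.2 (by positivity)
  simp only [collision23, cons_val_zero, cons_val_one]
  linarith [sqrt_nonneg ((m2 + m3) / (m1 * (m1 + m2 + m3)))]

theorem mcgeheeMatrix_mulVec_of_mass_moment_eq_zero (hm1 : m1 ≠ 0) (hm2 : m2 ≠ 0) (hm3 : m3 ≠ 0)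
    {v : Fin 3 → ℝ} (hv : m1 * v 0 + m2 * v 1 + m3 * v 2 = 0) :
    mcgeheeMatrix m1 m2 m3 *ᵥ v = √(m1 * m2 * m3 / (m1 + m2 + m3)) •
      ![(v 1 - v 2) / m1, (v 2 - v 0) / m2, (v 0 - v 1) / m3] := by
  have hinv : (diagonal ![m1, m2, m3])⁻¹ = diagonal ![m1⁻¹, m2⁻¹, m3⁻¹] := by
    refine inv_eq_right_inv ?_
    rw [diagonal_mul_diagonal, ← diagonal_one]
    congr 1
    ext i
    fin_cases i <;> simp [hm1, hm2, hm3]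
  rw [mcgeheeMatrix, hinv]
  ext i
  fin_cases i <;>
    simp only [mulVec, dotProduct, Fin.sum_univ_three, diagonal, mul_apply, of_apply,
      Matrix.add_apply, Matrix.smul_apply, Pi.smul_apply, smul_eq_mul, Fin.zero_eta, Fin.mk_one,
      Fin.reduceFinMk, cons_val_zero, cons_val_one, cons_val, cons_val', cons_val_fin_one, mul_ite,
      ite_mul, one_mul, mul_one, mul_zero, zero_mul, add_zero, Finset.sum_ite_eq,
      Finset.sum_ite_eq', Finset.mem_univ, if_true] <;>
    linear_combination (m1 + m2 + m3)⁻¹ * hv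

/- With `p = sin 2λ` and `e = cos 2λ`, this makes the rotation by `Ã` have unit angular speed; the
core identity is `(m1 + m2) * (m2 + m3) * e ^ 2 = m1 * m3`. -/
theorem sqrt_mul_eq_of_sq_add_sq_eq_one (hm1 : 0 < m1) (hm2 : 0 < m2) (hm3 : 0 < m3) {p e : ℝ}
    (hp : 0 ≤ p) (hpe : p ^ 2 + e ^ 2 = 1)
    (he : e = collision12 m1 m2 m3 ⬝ᵥ diagonal ![m1, m2, m3] *ᵥ collision23 m1 m2 m3) :
    √(m1 * m2 * m3 / (m1 + m2 + m3)) * p = m2 * e := by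
  have hα := mul_sq_sqrt_div (a := (m1 + m2) * (m1 + m2 + m3)) (by positivity) hm3.le
  have hδ := mul_sq_sqrt_div (a := (m2 + m3) * (m1 + m2 + m3)) (by positivity) hm1.le
  have hk := mul_sq_sqrt_div (a := m1 + m2 + m3) (b := m1 * m2 * m3) (by positivity) (by positivity)
  rw [collision12_dotProduct_collision23 hm1 hm2 hm3] at he
  have he0 : 0 ≤ e := by rw [he]; positivity
  refine (pow_left_inj₀ (by positivity) (by positivity) two_ne_zero).1 ?_
  subst he
  generalize √(m3 / ((m1 + m2) * (m1 + m2 + m3))) = α at *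
  generalize √(m1 / ((m2 + m3) * (m1 + m2 + m3))) = δ at *
  generalize √(m1 * m2 * m3 / (m1 + m2 + m3)) = k at *
  have hm : (m1 + m2 + m3) * (m1 + m2) * (m2 + m3) ≠ 0 := by positivity
  refine mul_left_cancel₀ hm ?_
  linear_combination (m1 + m2) * (m2 + m3) * p ^ 2 * hk + (m1 + m2) * (m2 + m3) * m1 * m2 * m3 * hpe
    - (m1 * m2 * m3 + (m1 + m2 + m3) * m2 ^ 2) * ((m1 + m2) * (m1 + m2 + m3) * α ^ 2 * hδ + m1 * hα)

theorem smul_mcgeheeMatrix_mulVec_collision12 (hm1 : 0 < m1) (hm2 : 0 < m2) (hm3 : 0 < m3)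
    {p e : ℝ} (hp : 0 ≤ p) (hpe : p ^ 2 + e ^ 2 = 1)
    (he : e = collision12 m1 m2 m3 ⬝ᵥ diagonal ![m1, m2, m3] *ᵥ collision23 m1 m2 m3) :
    p • mcgeheeMatrix m1 m2 m3 *ᵥ collision12 m1 m2 m3 =
      collision23 m1 m2 m3 - e • collision12 m1 m2 m3 := by
  rw [mcgeheeMatrix_mulVec_of_mass_moment_eq_zero hm1.ne' hm2.ne' hm3.ne'
    (mass_moment_collision12 hm1 hm2 hm3), smul_smul, mul_comm,
    sqrt_mul_eq_of_sq_add_sq_eq_one hm1 hm2 hm3 hp hpe he,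
    he, collision12_dotProduct_collision23 hm1 hm2 hm3]
  have hα := mul_sq_sqrt_div (a := (m1 + m2) * (m1 + m2 + m3)) (by positivity) hm3.le
  rw [collision12_eq hm1 hm2 hm3, collision23_eq hm1 hm2 hm3]
  generalize √(m3 / ((m1 + m2) * (m1 + m2 + m3))) = α at *
  generalize √(m1 / ((m2 + m3) * (m1 + m2 + m3))) = δ at *
  ext i
  fin_cases i <;>
    simp only [Fin.zero_eta, Fin.mk_one, Fin.reduceFinMk, cons_val_zero, cons_val_one, cons_val,
      Pi.sub_apply, Pi.smul_apply, smul_eq_mul] <;>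
    field_simp
  · linear_combination -δ * (m2 + m3) * hα
  · linear_combination δ * hα
  · linear_combination δ * hα

theorem smul_mcgeheeMatrix_mulVec_collision23 (hm1 : 0 < m1) (hm2 : 0 < m2) (hm3 : 0 < m3)
    {p e : ℝ} (hp : 0 ≤ p) (hpe : p ^ 2 + e ^ 2 = 1)
    (he : e = collision12 m1 m2 m3 ⬝ᵥ diagonal ![m1, m2, m3] *ᵥ collision23 m1 m2 m3) :
    p • mcgeheeMatrix m1 m2 m3 *ᵥ collision23 m1 m2 m3 =
      e • collision23 m1 m2 m3 - collision12 m1 m2 m3 := by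
  rw [mcgeheeMatrix_mulVec_of_mass_moment_eq_zero hm1.ne' hm2.ne' hm3.ne'
    (mass_moment_collision23 hm1 hm2 hm3), smul_smul, mul_comm,
    sqrt_mul_eq_of_sq_add_sq_eq_one hm1 hm2 hm3 hp hpe he,
    he, collision12_dotProduct_collision23 hm1 hm2 hm3]
  have hδ := mul_sq_sqrt_div (a := (m2 + m3) * (m1 + m2 + m3)) (by positivity) hm1.le
  rw [collision12_eq hm1 hm2 hm3, collision23_eq hm1 hm2 hm3]
  generalize √(m3 / ((m1 + m2) * (m1 + m2 + m3))) = α at *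
  generalize √(m1 / ((m2 + m3) * (m1 + m2 + m3))) = δ at *
  ext i
  fin_cases i <;>
    simp only [Fin.zero_eta, Fin.mk_one, Fin.reduceFinMk, cons_val_zero, cons_val_one, cons_val,
      Pi.sub_apply, Pi.smul_apply, smul_eq_mul] <;>
    field_simp
  · linear_combination α * hδ
  · linear_combination α * hδ
  · linear_combination -α * (m1 + m2) * hδ

end ThreeBody

/-- Properties of the McGehee parametrization `S` of the arc of
collinear configurations: unit moment of inertia and center of mass zero, endpoint
values `c` and `d`, explicit separation formulas, ordering with equality exactly at
the endpoints, real analyticity and `S'(s) = λ·Ã·S(s)`. -/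
theorem mcgehee_parametrization_properties
    (m1 m2 m3 : ℝ) (hm1 : 0 < m1) (hm2 : 0 < m2) (hm3 : 0 < m3)
    (M A1 A2 At : Matrix (Fin 3) (Fin 3) ℝ)
    (hM : M = Matrix.diagonal ![m1, m2, m3])
    (hA1 : A1 = Matrix.of fun _ _ => (1 : ℝ))
    (hA2 : A2 = !![0, 1, -1; -1, 0, 1; 1, -1, 0])
    (hAt : At = (1 / (m1 + m2 + m3)) • (A1 * M)
            + Real.sqrt (m1 * m2 * m3 / (m1 + m2 + m3)) • (M⁻¹ * A2))
    (c d : Fin 3 → ℝ)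
    (hc : c = ![-Real.sqrt (m3 / ((m1 + m2) * (m1 + m2 + m3))),
                -Real.sqrt (m3 / ((m1 + m2) * (m1 + m2 + m3))),
                Real.sqrt ((m1 + m2) / (m3 * (m1 + m2 + m3)))])
    (hd : d = ![-Real.sqrt ((m2 + m3) / (m1 * (m1 + m2 + m3))),
                Real.sqrt (m1 / ((m2 + m3) * (m1 + m2 + m3))),
                Real.sqrt (m1 / ((m2 + m3) * (m1 + m2 + m3)))])
    (lam : ℝ) (hlam : lam ∈ Set.Ioo 0 (Real.pi / 4))
    (hlam2 : Real.cos (2 * lam) = c ⬝ᵥ M.mulVec d)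
    (S : ℝ → Fin 3 → ℝ)
    (hS : ∀ s : ℝ, S s = (Real.sin (2 * lam))⁻¹ •
      (Real.sin (lam * (1 - s)) • c + Real.sin (lam * (1 + s)) • d)) :
    (∀ s ∈ Set.Icc (-1 : ℝ) 1,
      (m1 * S s 0 + m2 * S s 1 + m3 * S s 2 = 0) ∧ S s ⬝ᵥ M.mulVec (S s) = 1) ∧
    S (-1) = c ∧ S 1 = d ∧
    (∀ s ∈ Set.Icc (-1 : ℝ) 1,
      S s 1 - S s 0 = (d 1 - d 0) * Real.sin (lam * (1 + s)) / Real.sin (2 * lam) ∧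
      S s 2 - S s 1 = (c 2 - c 1) * Real.sin (lam * (1 - s)) / Real.sin (2 * lam)) ∧
    (∀ s ∈ Set.Icc (-1 : ℝ) 1,
      S s 0 ≤ S s 1 ∧ S s 1 ≤ S s 2 ∧
      (S s 0 = S s 1 ↔ s = -1) ∧ (S s 1 = S s 2 ↔ s = 1)) ∧
    (∀ s : ℝ, AnalyticAt ℝ S s) ∧
    (∀ s : ℝ, HasDerivAt S (lam • At.mulVec (S s)) s) := by
  obtain ⟨hlam0, hlam4⟩ := hlam
  have hp : 0 < sin (2 * lam) := sin_pos_of_pos_of_lt_pi (by linarith) (by linarith [pi_pos])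
  obtain rfl : c = collision12 m1 m2 m3 := hc
  obtain rfl : d = collision23 m1 m2 m3 := hd
  subst hM hA1 hA2
  obtain rfl : At = mcgeheeMatrix m1 m2 m3 := hAt
  obtain rfl : S = arcParam lam (collision12 m1 m2 m3) (collision23 m1 m2 m3) := funext hS
  have hpe := sin_sq_add_cos_sq (2 * lam)
  have hsep01 (s : ℝ) := arcParam_apply_sub_of_left_eq (lam := lam) (d := collision23 m1 m2 m3)
    (collision12_zero_eq_one m1 m2 m3) s
  have hsep12 (s : ℝ) := arcParam_apply_sub_of_right_eq (lam := lam) (c := collision12 m1 m2 m3)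
    (collision23_one_eq_two m1 m2 m3) s
  refine ⟨fun s _ => ⟨?_, ?_⟩, arcParam_neg_one hp.ne', arcParam_one hp.ne',
    fun s _ => ⟨hsep01 s, hsep12 s⟩, fun s hs => ?_, analyticAt_arcParam lam _ _,
    fun s => hasDerivAt_arcParam_of_smul_map lam _ _ s (toLin' (mcgeheeMatrix m1 m2 m3)) hp.ne'
      (smul_mcgeheeMatrix_mulVec_collision12 hm1 hm2 hm3 hp.le hpe hlam2)
      (smul_mcgeheeMatrix_mulVec_collision23 hm1 hm2 hm3 hp.le hpe hlam2)⟩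
  · simp only [arcParam_apply]
    linear_combination (sin (2 * lam))⁻¹ * sin (lam * (1 - s)) * mass_moment_collision12 hm1 hm2 hm3
      + (sin (2 * lam))⁻¹ * sin (lam * (1 + s)) * mass_moment_collision23 hm1 hm2 hm3
  · have hB := toBilin'_apply' (diagonal ![m1, m2, m3])
    rw [← hB]
    refine bilin_arcParam_self _ s ?_ ?_ ?_ ?_ hp.ne' <;> rw [hB]
    · exact inertia_collision12 hm1 hm2 hm3
    · exact inertia_collision23 hm1 hm2 hm3
    · exact hlam2.symm
    · exact collision23_dotProduct_collision12.trans hlam2.symm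
  · obtain ⟨h01, h01_iff⟩ := le_and_eq_iff_of_sub_eq_mul_sin
      (sub_pos.2 (collision23_zero_lt_one hm1 hm2 hm3)) hp hlam0 (by linarith)
      ⟨by linarith [hs.1], by linarith [hs.2]⟩ (hsep01 s)
    obtain ⟨h12, h12_iff⟩ := le_and_eq_iff_of_sub_eq_mul_sin
      (sub_pos.2 (collision12_one_lt_two hm1 hm2 hm3)) hp hlam0 (by linarith)
      ⟨by linarith [hs.2], by linarith [hs.1]⟩ (hsep12 s)
    exact ⟨h01, h12, h01_iff.trans ⟨fun h => by linarith, fun h => by linarith⟩,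
      h12_iff.trans ⟨fun h => by linarith, fun h => by linarith⟩⟩
end

section
/- The reduced potential Ũ is strictly positive and strictly convex on (−1,1) and blows up at the endpoints: Ũ(s) > 0 for all s ∈ (−1,1), Ũ''(s) > 0 for all s ∈ (−1,1), and Ũ(s) → +∞ as s → −1⁺ and as s → 1⁻. Consequently Ũ has a unique critical point s_e ∈ (−1,1), and s_e is its strict global minimum. -/
/-!
The distances `r₁₂`, `r₂₃` are positive multiples of `sin` evaluated in `(0, 2λ) ⊆ (0, π)`, so
they are positive and strictly concave (`r'' = -λ² r`). Composed with the strictly convex,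
decreasing `x ↦ x ^ (-a)`, each of the three terms of `Ũ` has positive second derivative, hence
`Ũ` is strictly convex. Since `r₁₂` vanishes at `s = -1` and `r₂₃` at `s = 1`, `Ũ` blows up at
both ends, and a strictly convex function on an interval with this property has exactly one
critical point, its strict global minimum.
-/

open Real Set Filter Topology

def HasSecondDerivOn (f f' f'' : ℝ → ℝ) (S : Set ℝ) : Prop :=
  ∀ x ∈ S, HasDerivAt f (f' x) x ∧ HasDerivAt f' (f'' x) x

namespace HasSecondDerivOn

variable {f f' f'' g g' g'' : ℝ → ℝ} {S : Set ℝ}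

theorem mono {T : Set ℝ} (hf : HasSecondDerivOn f f' f'' S) (hTS : T ⊆ S) :
    HasSecondDerivOn f f' f'' T :=
  fun x hx => hf x (hTS hx)

theorem add (hf : HasSecondDerivOn f f' f'' S) (hg : HasSecondDerivOn g g' g'' S) :
    HasSecondDerivOn (fun x => f x + g x) (fun x => f' x + g' x) (fun x => f'' x + g'' x) S :=
  fun x hx => ⟨(hf x hx).1.add (hg x hx).1, (hf x hx).2.add (hg x hx).2⟩

theorem const_mul (c : ℝ) (hf : HasSecondDerivOn f f' f'' S) :
    HasSecondDerivOn (fun x => c * f x) (fun x => c * f' x) (fun x => c * f'' x) S :=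
  fun x hx => ⟨(hf x hx).1.const_mul c, (hf x hx).2.const_mul c⟩

theorem rpow_const (hf : HasSecondDerivOn f f' f'' S) (hpos : ∀ x ∈ S, 0 < f x) (p : ℝ) :
    HasSecondDerivOn (fun x => f x ^ p) (fun x => p * f x ^ (p - 1) * f' x)
      (fun x => p * ((p - 1) * f x ^ (p - 2) * f' x ^ 2 + f x ^ (p - 1) * f'' x)) S := by
  intro x hx
  obtain ⟨hf1, hf2⟩ := hf x hx
  have hne : f x ≠ 0 := (hpos x hx).ne'
  refine ⟨(hf1.rpow_const (Or.inl hne)).congr_deriv (by ring), ?_⟩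
  have h := ((hf1.rpow_const (p := p - 1) (Or.inl hne)).const_mul p).mul hf2
  refine h.congr_deriv ?_
  rw [show p - 1 - 1 = p - 2 by ring]
  ring

theorem deriv_deriv (hf : HasSecondDerivOn f f' f'' S) (hS : IsOpen S) {x : ℝ} (hx : x ∈ S) :
    deriv (deriv f) x = f'' x := by
  have h : deriv f =ᶠ[𝓝 x] f' :=
    eventually_of_mem (hS.mem_nhds hx) fun y hy => (hf y hy).1.deriv
  rw [h.deriv_eq, (hf x hx).2.deriv]

theorem strictConvexOn (hf : HasSecondDerivOn f f' f'' S) (hSc : Convex ℝ S) (hSo : IsOpen S)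
    (hf'' : ∀ x ∈ S, 0 < f'' x) : StrictConvexOn ℝ S f :=
  strictConvexOn_of_deriv2_pos hSc (fun x hx => (hf x hx).1.continuousAt.continuousWithinAt)
    fun x hx => by
      rw [hSo.interior_eq] at hx
      show 0 < deriv (deriv f) x
      exact (hf.deriv_deriv hSo hx).symm ▸ hf'' x hx

theorem differentiableAt (hf : HasSecondDerivOn f f' f'' S) {x : ℝ} (hx : x ∈ S) :
    DifferentiableAt ℝ f x :=
  (hf x hx).1.differentiableAt

end HasSecondDerivOn

theorem hasSecondDerivOn_of_eq_mul_sin {r : ℝ → ℝ} (C ω θ : ℝ)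
    (hr : ∀ x, r x = C * sin (ω * x + θ)) (S : Set ℝ) :
    HasSecondDerivOn r (fun x => C * ω * cos (ω * x + θ)) (fun x => -ω ^ 2 * r x) S := by
  obtain rfl := funext hr
  intro x _
  have hlin : HasDerivAt (fun x => ω * x + θ) ω x := by
    simpa using ((hasDerivAt_id x).const_mul ω).add_const θ
  constructor
  · exact (((hasDerivAt_sin _).comp x hlin).const_mul C).congr_deriv (by ring)
  · exact (((hasDerivAt_cos _).comp x hlin).const_mul (C * ω)).congr_deriv (by ring)

theorem rpow_second_deriv_pos {p y y' y'' : ℝ} (hp : p < 0) (hy : 0 < y) (hy'' : y'' < 0) :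
    0 < p * ((p - 1) * y ^ (p - 2) * y' ^ 2 + y ^ (p - 1) * y'') := by
  refine mul_pos_of_neg_of_neg hp (add_neg_of_nonpos_of_neg ?_ ?_)
  · exact mul_nonpos_of_nonpos_of_nonneg
      (mul_nonpos_of_nonpos_of_nonneg (by linarith) (rpow_pos_of_pos hy _).le) (sq_nonneg _)
  · exact mul_neg_of_pos_of_neg (rpow_pos_of_pos hy _) hy''

theorem exists_deriv_eq_zero_of_tendsto_atTop {f : ℝ → ℝ} {a b : ℝ} (hab : a < b)
    (hf : ∀ x ∈ Ioo a b, DifferentiableAt ℝ f x)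
    (ha : Tendsto f (𝓝[>] a) atTop) (hb : Tendsto f (𝓝[<] b) atTop) :
    ∃ c ∈ Ioo a b, deriv f c = 0 := by
  -- `arctan ∘ f` tends to `π / 2` at both ends, so Rolle's theorem applies to it.
  have hlim {l : Filter ℝ} (h : Tendsto f l atTop) : Tendsto (arctan ∘ f) l (𝓝 (π / 2)) :=
    (tendsto_nhdsWithin_iff.mp tendsto_arctan_atTop).1.comp h
  obtain ⟨c, hc, hc0⟩ := exists_hasDerivAt_eq_zero' hab (hlim ha) (hlim hb)
    fun x hx => (hf x hx).hasDerivAt.arctan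
  exact ⟨c, hc, by simpa [(by positivity : 1 + f c ^ 2 ≠ 0)] using hc0⟩

theorem StrictConvexOn.lt_of_deriv_eq_zero {f : ℝ → ℝ} {S : Set ℝ} {c x : ℝ}
    (hf : StrictConvexOn ℝ S f) (hc : c ∈ S) (hx : x ∈ S) (hxc : x ≠ c)
    (hfc : DifferentiableAt ℝ f c) (hc0 : deriv f c = 0) : f c < f x := by
  rcases hxc.lt_or_gt with hlt | hlt
  · have h := hf.slope_lt_deriv hx hc hlt hfc
    rw [hc0, slope_def_field, div_neg_iff] at h
    rcases h with ⟨-, h⟩ | ⟨h, -⟩ <;> linarith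
  · have h := hf.deriv_lt_slope hc hx hlt hfc
    rw [hc0, slope_def_field, div_pos_iff] at h
    rcases h with ⟨h, -⟩ | ⟨-, h⟩ <;> linarith

theorem existsUnique_deriv_eq_zero_of_strictConvexOn {f : ℝ → ℝ} {a b : ℝ} (hab : a < b)
    (hconv : StrictConvexOn ℝ (Ioo a b) f) (hf : ∀ x ∈ Ioo a b, DifferentiableAt ℝ f x)
    (ha : Tendsto f (𝓝[Ioo a b] a) atTop) (hb : Tendsto f (𝓝[Ioo a b] b) atTop) :
    ∃! c, c ∈ Ioo a b ∧ deriv f c = 0 := by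
  rw [nhdsWithin_Ioo_eq_nhdsGT hab] at ha
  rw [nhdsWithin_Ioo_eq_nhdsLT hab] at hb
  obtain ⟨c, hc, hc0⟩ := exists_deriv_eq_zero_of_tendsto_atTop hab hf ha hb
  refine ⟨c, ⟨hc, hc0⟩, fun x ⟨hx, hx0⟩ => ?_⟩
  exact (hconv.strictMonoOn_deriv hf).injOn hx hc (hx0.trans hc0.symm)

noncomputable def reducedPotential (a α₁₂ α₂₃ α₁₃ : ℝ) (r₁₂ r₂₃ : ℝ → ℝ) (s : ℝ) : ℝ :=
  α₁₂ * r₁₂ s ^ (-a) + α₂₃ * r₂₃ s ^ (-a) + α₁₃ * (r₁₂ s + r₂₃ s) ^ (-a)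

section reducedPotential

variable {a α₁₂ α₂₃ α₁₃ : ℝ} {r₁₂ r₂₃ : ℝ → ℝ}

theorem reducedPotential_comm :
    reducedPotential a α₁₂ α₂₃ α₁₃ r₁₂ r₂₃ = reducedPotential a α₂₃ α₁₂ α₁₃ r₂₃ r₁₂ := by
  funext s
  simp only [reducedPotential]
  ring_nf

theorem reducedPotential_pos (hα₁₂ : 0 < α₁₂) (hα₂₃ : 0 < α₂₃) (hα₁₃ : 0 < α₁₃) {s : ℝ}
    (h₁₂ : 0 < r₁₂ s) (h₂₃ : 0 < r₂₃ s) : 0 < reducedPotential a α₁₂ α₂₃ α₁₃ r₁₂ r₂₃ s := by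
  unfold reducedPotential
  positivity

theorem tendsto_reducedPotential_atTop {l : Filter ℝ} (ha : 0 < a) (hα₁₂ : 0 < α₁₂)
    (hα₂₃ : 0 ≤ α₂₃) (hα₁₃ : 0 ≤ α₁₃) (h₁₂ : Tendsto r₁₂ l (𝓝 0))
    (hpos₁₂ : ∀ᶠ s in l, 0 < r₁₂ s) (hpos₂₃ : ∀ᶠ s in l, 0 ≤ r₂₃ s) :
    Tendsto (reducedPotential a α₁₂ α₂₃ α₁₃ r₁₂ r₂₃) l atTop := by
  have h₁₂' : Tendsto r₁₂ l (𝓝[>] 0) := tendsto_nhdsWithin_iff.mpr ⟨h₁₂, hpos₁₂⟩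
  refine tendsto_atTop_mono' l ?_
    (((tendsto_rpow_neg_nhdsGT_zero (neg_neg_of_pos ha)).comp h₁₂').const_mul_atTop hα₁₂)
  filter_upwards [hpos₁₂, hpos₂₃] with s hs₁₂ hs₂₃
  have : 0 ≤ α₂₃ * r₂₃ s ^ (-a) + α₁₃ * (r₁₂ s + r₂₃ s) ^ (-a) := by positivity
  simp only [reducedPotential, Function.comp]
  linarith

theorem exists_hasSecondDerivOn_reducedPotential {S : Set ℝ} {r₁₂' r₁₂'' r₂₃' r₂₃'' : ℝ → ℝ}
    (ha : 0 < a) (hα₁₂ : 0 < α₁₂) (hα₂₃ : 0 < α₂₃) (hα₁₃ : 0 < α₁₃)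
    (h₁₂ : HasSecondDerivOn r₁₂ r₁₂' r₁₂'' S) (h₂₃ : HasSecondDerivOn r₂₃ r₂₃' r₂₃'' S)
    (hpos₁₂ : ∀ x ∈ S, 0 < r₁₂ x) (hpos₂₃ : ∀ x ∈ S, 0 < r₂₃ x)
    (hconc₁₂ : ∀ x ∈ S, r₁₂'' x < 0) (hconc₂₃ : ∀ x ∈ S, r₂₃'' x < 0) :
    ∃ U' U'', HasSecondDerivOn (reducedPotential a α₁₂ α₂₃ α₁₃ r₁₂ r₂₃) U' U'' S ∧
      ∀ x ∈ S, 0 < U'' x := by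
  have hp : -a < 0 := neg_neg_of_pos ha
  have hpos₁₃ x (hx : x ∈ S) : 0 < r₁₂ x + r₂₃ x := add_pos (hpos₁₂ x hx) (hpos₂₃ x hx)
  refine ⟨_, _, ((((h₁₂.rpow_const hpos₁₂ (-a)).const_mul α₁₂).add
    ((h₂₃.rpow_const hpos₂₃ (-a)).const_mul α₂₃)).add
    (((h₁₂.add h₂₃).rpow_const hpos₁₃ (-a)).const_mul α₁₃)), fun x hx => ?_⟩
  have h₁ := rpow_second_deriv_pos (y' := r₁₂' x) hp (hpos₁₂ x hx) (hconc₁₂ x hx)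
  have h₂ := rpow_second_deriv_pos (y' := r₂₃' x) hp (hpos₂₃ x hx) (hconc₂₃ x hx)
  have h₃ := rpow_second_deriv_pos (y' := r₁₂' x + r₂₃' x) hp (hpos₁₃ x hx)
    (add_neg (hconc₁₂ x hx) (hconc₂₃ x hx))
  exact add_pos (add_pos (mul_pos hα₁₂ h₁) (mul_pos hα₂₃ h₂)) (mul_pos hα₁₃ h₃)

theorem reducedPotential_convexity_of_concave {r₁₂' r₁₂'' r₂₃' r₂₃'' : ℝ → ℝ}
    (ha : 0 < a) (hα₁₂ : 0 < α₁₂) (hα₂₃ : 0 < α₂₃) (hα₁₃ : 0 < α₁₃)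
    (h₁₂ : HasSecondDerivOn r₁₂ r₁₂' r₁₂'' (Ioo (-1) 1))
    (h₂₃ : HasSecondDerivOn r₂₃ r₂₃' r₂₃'' (Ioo (-1) 1))
    (hpos₁₂ : ∀ s ∈ Ioo (-1 : ℝ) 1, 0 < r₁₂ s) (hpos₂₃ : ∀ s ∈ Ioo (-1 : ℝ) 1, 0 < r₂₃ s)
    (hconc₁₂ : ∀ s ∈ Ioo (-1 : ℝ) 1, r₁₂'' s < 0) (hconc₂₃ : ∀ s ∈ Ioo (-1 : ℝ) 1, r₂₃'' s < 0)
    (hlim₁₂ : Tendsto r₁₂ (𝓝[Ioo (-1) 1] (-1)) (𝓝 0))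
    (hlim₂₃ : Tendsto r₂₃ (𝓝[Ioo (-1) 1] 1) (𝓝 0)) :
    let U := reducedPotential a α₁₂ α₂₃ α₁₃ r₁₂ r₂₃
    (∀ s ∈ Ioo (-1 : ℝ) 1, 0 < U s) ∧
    (∀ s ∈ Ioo (-1 : ℝ) 1, 0 < deriv (deriv U) s) ∧
    Tendsto U (𝓝[Ioo (-1) 1] (-1)) atTop ∧
    Tendsto U (𝓝[Ioo (-1) 1] 1) atTop ∧
    (∃! se : ℝ, se ∈ Ioo (-1 : ℝ) 1 ∧ deriv U se = 0) ∧
    (∀ se ∈ Ioo (-1 : ℝ) 1, deriv U se = 0 → ∀ s ∈ Ioo (-1 : ℝ) 1, s ≠ se → U se < U s) := by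
  intro U
  obtain ⟨U', U'', hU, hU''⟩ := exists_hasSecondDerivOn_reducedPotential ha hα₁₂ hα₂₃
    hα₁₃ h₁₂ h₂₃ hpos₁₂ hpos₂₃ hconc₁₂ hconc₂₃
  have hstrict : StrictConvexOn ℝ (Ioo (-1) 1) U :=
    hU.strictConvexOn (convex_Ioo _ _) isOpen_Ioo hU''
  have hleft : Tendsto U (𝓝[Ioo (-1) 1] (-1)) atTop := tendsto_reducedPotential_atTop ha hα₁₂
    hα₂₃.le hα₁₃.le hlim₁₂ (eventually_mem_nhdsWithin.mono hpos₁₂)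
    (eventually_mem_nhdsWithin.mono fun s hs => (hpos₂₃ s hs).le)
  have hright : Tendsto U (𝓝[Ioo (-1) 1] 1) atTop := by
    rw [show U = reducedPotential a α₂₃ α₁₂ α₁₃ r₂₃ r₁₂ from reducedPotential_comm]
    exact tendsto_reducedPotential_atTop ha hα₂₃ hα₁₂.le hα₁₃.le hlim₂₃
      (eventually_mem_nhdsWithin.mono hpos₂₃)
      (eventually_mem_nhdsWithin.mono fun s hs => (hpos₁₂ s hs).le)
  refine ⟨fun s hs => reducedPotential_pos hα₁₂ hα₂₃ hα₁₃ (hpos₁₂ s hs) (hpos₂₃ s hs),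
    fun s hs => (hU.deriv_deriv isOpen_Ioo hs).symm ▸ hU'' s hs, hleft, hright,
    existsUnique_deriv_eq_zero_of_strictConvexOn (by norm_num) hstrict
      (fun s hs => hU.differentiableAt hs) hleft hright,
    fun se hse hse0 s hs hsse => hstrict.lt_of_deriv_eq_zero hse hs hsse
      (hU.differentiableAt hse) hse0⟩

end reducedPotential

theorem reduced_potential_convexity_general
    (a : ℝ) (ha : 4 < a)
    (m1 m2 m3 : ℝ) (hm1 : 0 < m1) (hm2 : 0 < m2) (hm3 : 0 < m3)
    (α12 α13 α23 : ℝ) (hα12 : 0 < α12) (hα13 : 0 < α13) (hα23 : 0 < α23)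
    (c d : Fin 3 → ℝ)
    (hc : c = ![-Real.sqrt (m3 / ((m1 + m2) * (m1 + m2 + m3))),
                -Real.sqrt (m3 / ((m1 + m2) * (m1 + m2 + m3))),
                Real.sqrt ((m1 + m2) / (m3 * (m1 + m2 + m3)))])
    (hd : d = ![-Real.sqrt ((m2 + m3) / (m1 * (m1 + m2 + m3))),
                Real.sqrt (m1 / ((m2 + m3) * (m1 + m2 + m3))),
                Real.sqrt (m1 / ((m2 + m3) * (m1 + m2 + m3)))])
    (lam : ℝ) (hlam : lam ∈ Set.Ioo 0 (Real.pi / 4))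
    (r12 r23 : ℝ → ℝ)
    (hr12 : ∀ s : ℝ, r12 s = (d 1 - d 0) * Real.sin (lam * (1 + s)) / Real.sin (2 * lam))
    (hr23 : ∀ s : ℝ, r23 s = (c 2 - c 1) * Real.sin (lam * (1 - s)) / Real.sin (2 * lam))
    (U : ℝ → ℝ)
    (hU : ∀ s : ℝ, U s = α12 * r12 s ^ (-a) + α23 * r23 s ^ (-a)
          + α13 * (r12 s + r23 s) ^ (-a)) :
    (∀ s ∈ Set.Ioo (-1 : ℝ) 1, 0 < U s) ∧
    (∀ s ∈ Set.Ioo (-1 : ℝ) 1, 0 < deriv (deriv U) s) ∧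
    Filter.Tendsto U (nhdsWithin (-1) (Set.Ioo (-1 : ℝ) 1)) Filter.atTop ∧
    Filter.Tendsto U (nhdsWithin 1 (Set.Ioo (-1 : ℝ) 1)) Filter.atTop ∧
    (∃! se : ℝ, se ∈ Set.Ioo (-1 : ℝ) 1 ∧ deriv U se = 0) ∧
    (∀ se : ℝ, se ∈ Set.Ioo (-1 : ℝ) 1 → deriv U se = 0 →
      ∀ s ∈ Set.Ioo (-1 : ℝ) 1, s ≠ se → U se < U s) := by
  obtain ⟨hlam0, hlam4⟩ := hlam
  have hsin : 0 < sin (2 * lam) := sin_pos_of_pos_of_lt_pi (by linarith) (by linarith [pi_pos])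
  have hd10 : 0 < d 1 - d 0 := by simp [hd]; positivity
  have hc21 : 0 < c 2 - c 1 := by simp [hc]; positivity
  have h12 := hasSecondDerivOn_of_eq_mul_sin (r := r12) ((d 1 - d 0) / sin (2 * lam)) lam lam
    (fun s => by rw [hr12]; ring_nf) univ
  have h23 := hasSecondDerivOn_of_eq_mul_sin (r := r23) ((c 2 - c 1) / sin (2 * lam)) (-lam) lam
    (fun s => by rw [hr23]; ring_nf) univ
  have hpos12 (s) (hs : s ∈ Ioo (-1 : ℝ) 1) : 0 < r12 s := by
    rw [hr12]
    exact div_pos (mul_pos hd10 (sin_pos_of_pos_of_lt_pi (by nlinarith [hs.1])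
      (by nlinarith [hs.2, pi_pos]))) hsin
  have hpos23 (s) (hs : s ∈ Ioo (-1 : ℝ) 1) : 0 < r23 s := by
    rw [hr23]
    exact div_pos (mul_pos hc21 (sin_pos_of_pos_of_lt_pi (by nlinarith [hs.2])
      (by nlinarith [hs.1, pi_pos]))) hsin
  obtain rfl : U = reducedPotential a α12 α23 α13 r12 r23 := funext hU
  refine reducedPotential_convexity_of_concave (by linarith) hα12 hα23 hα13
    (h12.mono (subset_univ _)) (h23.mono (subset_univ _)) hpos12 hpos23
    (fun s hs => mul_neg_of_neg_of_pos (by nlinarith) (hpos12 s hs))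
    (fun s hs => mul_neg_of_neg_of_pos (by nlinarith) (hpos23 s hs)) ?_ ?_
  · simpa [hr12] using (h12 (-1) trivial).1.continuousAt.tendsto.mono_left nhdsWithin_le_nhds
  · simpa [hr23] using (h23 1 trivial).1.continuousAt.tendsto.mono_left nhdsWithin_le_nhds

/-- The reduced potential `Ũ` is strictly positive and strictly convex
on `(−1,1)`, blows up at both endpoints, and hence has a unique critical point
`s_e ∈ (−1,1)`, which is its strict global minimum. -/
theorem reduced_potential_convexity
    (a b : ℝ) (ha : 4 < a) (hab : a < b - 1)
    (m1 m2 m3 : ℝ) (hm1 : 0 < m1) (hm2 : 0 < m2) (hm3 : 0 < m3)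
    (α12 α13 α23 : ℝ) (hα12 : 0 < α12) (hα13 : 0 < α13) (hα23 : 0 < α23)
    (M : Matrix (Fin 3) (Fin 3) ℝ) (hM : M = Matrix.diagonal ![m1, m2, m3])
    (c d : Fin 3 → ℝ)
    (hc : c = ![-Real.sqrt (m3 / ((m1 + m2) * (m1 + m2 + m3))),
                -Real.sqrt (m3 / ((m1 + m2) * (m1 + m2 + m3))),
                Real.sqrt ((m1 + m2) / (m3 * (m1 + m2 + m3)))])
    (hd : d = ![-Real.sqrt ((m2 + m3) / (m1 * (m1 + m2 + m3))),
                Real.sqrt (m1 / ((m2 + m3) * (m1 + m2 + m3))),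
                Real.sqrt (m1 / ((m2 + m3) * (m1 + m2 + m3)))])
    (lam : ℝ) (hlam : lam ∈ Set.Ioo 0 (Real.pi / 4))
    (hlam2 : Real.cos (2 * lam) = c ⬝ᵥ M.mulVec d)
    (r12 r23 : ℝ → ℝ)
    (hr12 : ∀ s : ℝ, r12 s = (d 1 - d 0) * Real.sin (lam * (1 + s)) / Real.sin (2 * lam))
    (hr23 : ∀ s : ℝ, r23 s = (c 2 - c 1) * Real.sin (lam * (1 - s)) / Real.sin (2 * lam))
    (U : ℝ → ℝ)
    (hU : ∀ s : ℝ, U s = α12 * r12 s ^ (-a) + α23 * r23 s ^ (-a)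
          + α13 * (r12 s + r23 s) ^ (-a)) :
    (∀ s ∈ Set.Ioo (-1 : ℝ) 1, 0 < U s) ∧
    (∀ s ∈ Set.Ioo (-1 : ℝ) 1, 0 < deriv (deriv U) s) ∧
    Filter.Tendsto U (nhdsWithin (-1) (Set.Ioo (-1 : ℝ) 1)) Filter.atTop ∧
    Filter.Tendsto U (nhdsWithin 1 (Set.Ioo (-1 : ℝ) 1)) Filter.atTop ∧
    (∃! se : ℝ, se ∈ Set.Ioo (-1 : ℝ) 1 ∧ deriv U se = 0) ∧
    (∀ se : ℝ, se ∈ Set.Ioo (-1 : ℝ) 1 → deriv U se = 0 →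
      ∀ s ∈ Set.Ioo (-1 : ℝ) 1, s ≠ se → U se < U s) :=
  reduced_potential_convexity_general a ha m1 m2 m3 hm1 hm2 hm3 α12 α13 α23 hα12 hα13 hα23 c d hc hd
    lam hlam r12 r23 hr12 hr23 U hU
end

section
/- Classification of equilibria of the regularized reduced zero-energy system: a point (y,s,w) ∈ ℝ × (−1,1) × ℝ is an equilibrium (all three components of the vector field vanish) if and only if w = 0, Ũ'(s) = 0, and y² = 2Ũ(s). In particular the equilibria are exactly the points P^± = (±√(2Ũ(s_e)), s_e, 0) with s_e a critical point of Ũ. -/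
open Real

/-- Classification of equilibria of the regularized reduced
zero-energy system: `(y,s,w) ∈ ℝ × (−1,1) × ℝ` is an equilibrium iff `w = 0`,
`Ũ'(s) = 0` and `y² = 2Ũ(s)`; i.e. the equilibria are exactly the points
`P^± = (±√(2Ũ(s_e)), s_e, 0)` with `s_e` a critical point of `Ũ`. -/
theorem reduced_system_equilibria
    (a b : ℝ) (ha : 4 < a) (hab : a < b - 1)
    (lam : ℝ) (hlam : lam ∈ Set.Ioo 0 (Real.pi / 4))
    (U V : ℝ → ℝ)
    (hUpos : ∀ s ∈ Set.Ioo (-1 : ℝ) 1, 0 < U s)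
    (hVpos : ∀ s ∈ Set.Ioo (-1 : ℝ) 1, 0 < V s)
    (hU2 : ContDiffOn ℝ 2 U (Set.Ioo (-1 : ℝ) 1))
    (hV2 : ContDiffOn ℝ 2 V (Set.Ioo (-1 : ℝ) 1))
    (F1 F2 F3 : ℝ → ℝ → ℝ → ℝ)
    (hF1 : ∀ y s w : ℝ, F1 y s w =
      -(b / 2 - 1) * w ^ 2 + (b - a) * (1 - s ^ 2) ^ a * (U s - y ^ 2 / 2))
    (hF2 : ∀ y s w : ℝ, F2 y s w = (1 / lam) * (1 - s ^ 2) ^ (a / 2) * w)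
    (hF3 : ∀ y s w : ℝ, F3 y s w =
      (a / 2 - 1) * (1 - s ^ 2) ^ a * y * w
      + (1 / (2 * lam)) * (1 - s ^ 2) ^ (a / 2 - 1)
          * ((1 - s ^ 2) * deriv V s / V s - 2 * a * s) * w ^ 2
      + (1 / lam) * (1 - s ^ 2) ^ (3 * a / 2)
          * (deriv U s - (deriv V s / V s) * (U s - y ^ 2 / 2))) :
    ∀ y w : ℝ, ∀ s ∈ Set.Ioo (-1 : ℝ) 1,
      ((F1 y s w = 0 ∧ F2 y s w = 0 ∧ F3 y s w = 0) ↔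
        (w = 0 ∧ deriv U s = 0 ∧ y ^ 2 = 2 * U s)) ∧
      ((F1 y s w = 0 ∧ F2 y s w = 0 ∧ F3 y s w = 0) ↔
        (w = 0 ∧ deriv U s = 0 ∧
          (y = Real.sqrt (2 * U s) ∨ y = -Real.sqrt (2 * U s)))) := by
  intro y w s hs
  obtain ⟨hs1, hs2⟩ := hs
  have h1s : (0:ℝ) < 1 - s ^ 2 := by nlinarith
  have hlam0 : (0:ℝ) < lam := hlam.1
  have hU := hUpos s ⟨hs1, hs2⟩
  have hpow : ∀ r : ℝ, (0:ℝ) < (1 - s ^ 2) ^ r := fun r =>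
    Real.rpow_pos_of_pos h1s r
  have key : (F1 y s w = 0 ∧ F2 y s w = 0 ∧ F3 y s w = 0) ↔
      (w = 0 ∧ deriv U s = 0 ∧ y ^ 2 = 2 * U s) := by
    constructor
    · rintro ⟨h1, h2, h3⟩
      rw [hF2] at h2
      have hw : w = 0 := by
        have := hpow (a / 2)
        have hl : (1:ℝ) / lam ≠ 0 := by positivity
        rcases mul_eq_zero.mp h2 with h | h
        · exfalso
          rcases mul_eq_zero.mp h with h' | h'
          exacts [hl h', (ne_of_gt this) h']
        · exact h
      subst hw
      rw [hF1] at h1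
      have hy : U s - y ^ 2 / 2 = 0 := by
        have hba : (0:ℝ) < b - a := by linarith
        have := hpow a
        have h1' : (b - a) * (1 - s ^ 2) ^ a * (U s - y ^ 2 / 2) = 0 := by
          linarith [h1]
        rcases mul_eq_zero.mp h1' with h | h
        · rcases mul_eq_zero.mp h with h' | h'
          · linarith
          · exact absurd h' (ne_of_gt this)
        · exact h
      refine ⟨rfl, ?_, by linarith⟩
      rw [hF3] at h3
      have := hpow (3 * a / 2)
      have h3' : (1 / lam) * (1 - s ^ 2) ^ (3 * a / 2) *
          (deriv U s - deriv V s / V s * (U s - y ^ 2 / 2)) = 0 := by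
        linarith [h3]
      rw [hy, mul_zero, sub_zero] at h3'
      rcases mul_eq_zero.mp h3' with h | h
      · rcases mul_eq_zero.mp h with h' | h'
        · exact absurd h' (by positivity)
        · exact absurd h' (ne_of_gt this)
      · exact h
    · rintro ⟨hw, hdU, hy⟩
      subst hw
      have hy' : U s - y ^ 2 / 2 = 0 := by linarith
      refine ⟨?_, ?_, ?_⟩
      · rw [hF1, hy']; ring
      · rw [hF2]; ring
      · rw [hF3, hy', hdU]; ring
  refine ⟨key, key.trans ?_⟩
  have h2U : (0:ℝ) ≤ 2 * U s := by linarith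
  have hiff : y ^ 2 = 2 * U s ↔
      (y = Real.sqrt (2 * U s) ∨ y = -Real.sqrt (2 * U s)) := by
    constructor
    · intro h
      have : Real.sqrt (2 * U s) = |y| := by
        rw [← h, Real.sqrt_sq_eq_abs]
      rcases abs_cases y with ⟨h1, _⟩ | ⟨h1, _⟩
      · left; rw [this, h1]
      · right; rw [this, h1]; ring
    · rintro (h | h) <;> subst h
      · exact Real.sq_sqrt h2U
      · rw [neg_pow, Real.sq_sqrt h2U]; ring
  tauto
end

section
/- Hyperbolicity of the 1+1+1 escape equilibria (linearized content of Proposition 4.6): suppose s_e ∈ (−1,1) satisfies Ũ'(s_e) = 0 and Ũ''(s_e) > 0, and let P^± = (±√(2Ũ(s_e)), s_e, 0). Then the Jacobian matrix of the vector field of the regularized reduced zero-energy system at P^+ has three real nonzero eigenvalues: one of them is ξ₁ = −(b−a)(1−s_e²)^a √(2Ũ(s_e)), and exactly one of the three eigenvalues is positive (the other two are negative). At P^− the Jacobian likewise has three real nonzero eigenvalues, exactly one of which is negative. In particular both equilibria are hyperbolic, P^+ has a one-dimensional unstable and two-dimensional stable eigenspace, and P^− has a two-dimensional unstable and one-dimensional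 stable eigenspace. -/
/-!
At `P± = (±√(2Ũ(sₑ)), sₑ, 0)` the equilibrium conditions `Ũ(sₑ) = y²/2` and `Ũ'(sₑ) = 0` make
`∂ₛF₁`, `∂_wF₁`, `∂_yF₂` and `∂ₛF₂` vanish, so the Jacobian has the block form
`[[ξ₁, 0, 0], [0, 0, β], [γ, δ, ε]]` with characteristic polynomial `(X - ξ₁)(X² - εX - βδ)`.
Since `βδ = λ⁻²(1 - sₑ²)^{2a} Ũ''(sₑ) > 0`, the quadratic factor has one negative and one positive
root, and the sign of `ξ₁ = ∓(b - a)(1 - sₑ²)^a √(2Ũ(sₑ))` decides the rest.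
-/

open Real Polynomial Set

theorem Matrix.charpoly_fin_three_blockTriangular {R : Type*} [CommRing R] (α β γ δ ε : R) :
    (Matrix.of ![![α, 0, 0], ![0, 0, β], ![γ, δ, ε]]).charpoly
      = (X - C α) * (X ^ 2 - C ε * X - C (β * δ)) := by
  rw [Matrix.charpoly, Matrix.det_fin_three]
  simp only [Nat.succ_eq_add_one, Nat.reduceAdd, Fin.isValue, Matrix.charmatrix_apply_eq,
    Matrix.of_apply, Matrix.cons_val', Matrix.cons_val_zero, Matrix.cons_val_fin_one,
    Matrix.cons_val_one, map_zero, sub_zero, Matrix.cons_val, ne_eq, Fin.reduceEq,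
    not_false_eq_true, Matrix.charmatrix_apply_ne, mul_neg, neg_mul, neg_neg, zero_ne_one,
    neg_zero, one_ne_zero, mul_zero, zero_mul, add_zero, C_mul]
  ring

theorem exists_X_sq_sub_C_mul_X_sub_C_eq_of_pos {p q : ℝ} (hq : 0 < q) :
    ∃ ξ₂ ξ₃ : ℝ, (X ^ 2 - C p * X - C q : ℝ[X]) = (X - C ξ₂) * (X - C ξ₃) ∧ ξ₂ < 0 ∧ 0 < ξ₃ := by
  set r := √(p ^ 2 + 4 * q)
  have hr : r ^ 2 = p ^ 2 + 4 * q := sq_sqrt (by positivity)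
  have hpr : |p| < r := by nlinarith [sq_abs p, abs_nonneg p, sqrt_nonneg (p ^ 2 + 4 * q)]
  refine ⟨(p - r) / 2, (p + r) / 2, ?_, by linarith [le_abs_self p], by linarith [neg_abs_le p]⟩
  have hsum : C ((p - r) / 2) + C ((p + r) / 2) = C p := by rw [← C_add]; congr 1; ring
  have hprod : C ((p - r) / 2) * C ((p + r) / 2) = -C q := by
    rw [← C_mul, ← C_neg]; congr 1; linear_combination (-1 / 4 : ℝ) * hr
  linear_combination X * hsum - hprod

theorem exists_charpoly_fin_three_blockTriangular_eq {α β γ δ ε : ℝ} (hβδ : 0 < β * δ) :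
    ∃ ξ₂ ξ₃ : ℝ, (Matrix.of ![![α, 0, 0], ![0, 0, β], ![γ, δ, ε]]).charpoly
        = (X - C α) * (X - C ξ₂) * (X - C ξ₃) ∧ ξ₂ < 0 ∧ 0 < ξ₃ := by
  obtain ⟨ξ₂, ξ₃, hq, hξ₂, hξ₃⟩ := exists_X_sq_sub_C_mul_X_sub_C_eq_of_pos (p := ε) hβδ
  exact ⟨ξ₂, ξ₃, by rw [Matrix.charpoly_fin_three_blockTriangular, hq, mul_assoc], hξ₂, hξ₃⟩

theorem one_sub_sq_pos {s : ℝ} (hs : s ∈ Ioo (-1 : ℝ) 1) : 0 < 1 - s ^ 2 :=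
  sub_pos.2 ((sq_lt_one_iff_abs_lt_one s).2 (abs_lt.2 hs))

theorem hasDerivAt_one_sub_sq_rpow {s : ℝ} (hs : 1 - s ^ 2 ≠ 0) (c : ℝ) :
    HasDerivAt (fun s : ℝ => (1 - s ^ 2) ^ c) (-(2 * s) * c * (1 - s ^ 2) ^ (c - 1)) s := by
  have h : HasDerivAt (fun s : ℝ => 1 - s ^ 2) (-(2 * s)) s := by
    simpa using (hasDerivAt_pow 2 s).const_sub 1
  exact h.rpow_const (Or.inl hs)

noncomputable section

namespace ReducedZeroEnergy

variable (a b lam : ℝ) (U V : ℝ → ℝ)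

def field₁ (y s w : ℝ) : ℝ :=
  -(b / 2 - 1) * w ^ 2 + (b - a) * (1 - s ^ 2) ^ a * (U s - y ^ 2 / 2)

def field₂ (s w : ℝ) : ℝ := (1 / lam) * (1 - s ^ 2) ^ (a / 2) * w

def field₃ (y s w : ℝ) : ℝ :=
  (a / 2 - 1) * (1 - s ^ 2) ^ a * y * w
    + (1 / (2 * lam)) * (1 - s ^ 2) ^ (a / 2 - 1)
        * ((1 - s ^ 2) * deriv V s / V s - 2 * a * s) * w ^ 2
    + (1 / lam) * (1 - s ^ 2) ^ (3 * a / 2)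
        * (deriv U s - (deriv V s / V s) * (U s - y ^ 2 / 2))

variable {a b lam U V}

theorem hasDerivAt_field₁_y (y s w : ℝ) :
    HasDerivAt (fun y => field₁ a b U y s w) (-(b - a) * (1 - s ^ 2) ^ a * y) y := by
  have h := (((hasDerivAt_pow 2 y).div_const 2).const_sub (U s)).const_mul
    ((b - a) * (1 - s ^ 2) ^ a) |>.const_add (-(b / 2 - 1) * w ^ 2)
  exact h.congr_deriv (by push_cast; ring)

theorem hasDerivAt_field₁_s {y s : ℝ} (w : ℝ) (hs : 1 - s ^ 2 ≠ 0) (hU : HasDerivAt U 0 s)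
    (hy : y ^ 2 = 2 * U s) : HasDerivAt (fun s => field₁ a b U y s w) 0 s := by
  have h := (((hasDerivAt_one_sub_sq_rpow hs a).mul (hU.sub_const (y ^ 2 / 2))).const_mul
    (b - a)).const_add (-(b / 2 - 1) * w ^ 2)
  refine (h.congr_deriv ?_).congr_of_eventuallyEq (.of_forall fun s => ?_)
  · rw [hy]; ring
  · simp only [field₁, Pi.mul_apply]; ring

theorem hasDerivAt_field₁_w (y s w : ℝ) :
    HasDerivAt (fun w => field₁ a b U y s w) (-(b - 2) * w) w := by
  have h := ((hasDerivAt_pow 2 w).const_mul (-(b / 2 - 1))).add_const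
    ((b - a) * (1 - s ^ 2) ^ a * (U s - y ^ 2 / 2))
  exact h.congr_deriv (by push_cast; ring)

theorem hasDerivAt_field₂_w (s w : ℝ) :
    HasDerivAt (fun w => field₂ a lam s w) ((1 / lam) * (1 - s ^ 2) ^ (a / 2)) w := by
  simpa [field₂] using (hasDerivAt_id w).const_mul ((1 / lam) * (1 - s ^ 2) ^ (a / 2))

theorem hasDerivAt_field₃_s {y s : ℝ} (hs : 1 - s ^ 2 ≠ 0) (hU : HasDerivAt U 0 s)
    (hU' : DifferentiableAt ℝ (deriv U) s) (hV : DifferentiableAt ℝ V s)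
    (hV' : DifferentiableAt ℝ (deriv V) s) (hV0 : V s ≠ 0) (hy : y ^ 2 = 2 * U s) :
    HasDerivAt (fun s => field₃ a lam U V y s 0)
      ((1 / lam) * (1 - s ^ 2) ^ (3 * a / 2) * deriv (deriv U) s) s := by
  have hbracket := hU'.hasDerivAt.sub
    ((hV'.hasDerivAt.div hV.hasDerivAt hV0).mul (hU.sub_const (y ^ 2 / 2)))
  have h := ((hasDerivAt_one_sub_sq_rpow hs (3 * a / 2)).mul hbracket).const_mul (1 / lam)
  refine (h.congr_deriv ?_).congr_of_eventuallyEq (.of_forall fun s => ?_)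
  · simp only [Pi.sub_apply, Pi.mul_apply, hU.deriv, hy]; ring
  · simp only [field₃, Pi.sub_apply, Pi.mul_apply, Pi.div_apply]; ring

theorem hasDerivAt_field₃_w (y s : ℝ) :
    HasDerivAt (fun w => field₃ a lam U V y s w) ((a / 2 - 1) * (1 - s ^ 2) ^ a * y) 0 := by
  have h := (((hasDerivAt_id (0 : ℝ)).const_mul ((a / 2 - 1) * (1 - s ^ 2) ^ a * y)).add
    ((hasDerivAt_pow 2 (0 : ℝ)).const_mul ((1 / (2 * lam)) * (1 - s ^ 2) ^ (a / 2 - 1)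
      * ((1 - s ^ 2) * deriv V s / V s - 2 * a * s)))).add_const
    ((1 / lam) * (1 - s ^ 2) ^ (3 * a / 2) * (deriv U s - (deriv V s / V s) * (U s - y ^ 2 / 2)))
  exact h.congr_deriv (by simp)

variable (a b lam U V) in
def jacobian (y s : ℝ) : Matrix (Fin 3) (Fin 3) ℝ :=
  Matrix.of
    ![![deriv (fun y => field₁ a b U y s 0) y, deriv (fun s => field₁ a b U y s 0) s,
        deriv (fun w => field₁ a b U y s w) 0],
      ![deriv (fun _ : ℝ => field₂ a lam s 0) y, deriv (fun s => field₂ a lam s 0) s,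
        deriv (fun w => field₂ a lam s w) 0],
      ![deriv (fun y => field₃ a lam U V y s 0) y, deriv (fun s => field₃ a lam U V y s 0) s,
        deriv (fun w => field₃ a lam U V y s w) 0]]

theorem jacobian_eq_at_equilibrium {y s : ℝ} (hs : 1 - s ^ 2 ≠ 0) (hU : ContDiffAt ℝ 2 U s)
    (hV : ContDiffAt ℝ 2 V s) (hV0 : V s ≠ 0) (hcrit : deriv U s = 0) (hy : y ^ 2 = 2 * U s) :
    jacobian a b lam U V y s = Matrix.of
      ![![-(b - a) * (1 - s ^ 2) ^ a * y, 0, 0],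
        ![0, 0, (1 / lam) * (1 - s ^ 2) ^ (a / 2)],
        ![deriv (fun y => field₃ a lam U V y s 0) y,
          (1 / lam) * (1 - s ^ 2) ^ (3 * a / 2) * deriv (deriv U) s,
          (a / 2 - 1) * (1 - s ^ 2) ^ a * y]] := by
  have hU₁ : HasDerivAt U 0 s := hcrit ▸ (hU.differentiableAt (by norm_num)).hasDerivAt
  have hU₂ := (hU.derivWithin (m := 1) (by norm_num)).differentiableAt one_ne_zero
  have hV₁ := hV.differentiableAt (by norm_num)
  have hV₂ := (hV.derivWithin (m := 1) (by norm_num)).differentiableAt one_ne_zero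
  have hf₂ : (fun s => field₂ a lam s 0) = fun _ => 0 := by simp [field₂]
  rw [jacobian, (hasDerivAt_field₁_y y s 0).deriv, (hasDerivAt_field₁_s 0 hs hU₁ hy).deriv,
    (hasDerivAt_field₁_w y s 0).deriv, deriv_const, hf₂, deriv_const,
    (hasDerivAt_field₂_w s 0).deriv, (hasDerivAt_field₃_s hs hU₁ hU₂ hV₁ hV₂ hV0 hy).deriv,
    (hasDerivAt_field₃_w y s).deriv, mul_zero]

variable (a b) in
theorem exists_charpoly_jacobian_eq {y s : ℝ} (hlam : lam ≠ 0) (hs : s ∈ Ioo (-1 : ℝ) 1)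
    (hU : ContDiffAt ℝ 2 U s) (hV : ContDiffAt ℝ 2 V s) (hV0 : V s ≠ 0) (hcrit : deriv U s = 0)
    (hconv : 0 < deriv (deriv U) s) (hy : y ^ 2 = 2 * U s) :
    ∃ ξ₂ ξ₃ : ℝ, (jacobian a b lam U V y s).charpoly
        = (X - C (-(b - a) * (1 - s ^ 2) ^ a * y)) * (X - C ξ₂) * (X - C ξ₃) ∧ ξ₂ < 0 ∧ 0 < ξ₃ := by
  have hs' := one_sub_sq_pos hs
  rw [jacobian_eq_at_equilibrium hs'.ne' hU hV hV0 hcrit hy]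
  refine exists_charpoly_fin_three_blockTriangular_eq ?_
  calc (0 : ℝ) < (1 / lam) ^ 2
        * ((1 - s ^ 2) ^ (a / 2) * (1 - s ^ 2) ^ (3 * a / 2) * deriv (deriv U) s) := by positivity
    _ = _ := by ring

end ReducedZeroEnergy

end

open ReducedZeroEnergy in
theorem escape_equilibria_hyperbolic_general
    (a b : ℝ) (hab : a < b - 1)
    (lam : ℝ) (hlam : lam ∈ Set.Ioo 0 (Real.pi / 4))
    (U V : ℝ → ℝ)
    (hUpos : ∀ s ∈ Set.Ioo (-1 : ℝ) 1, 0 < U s)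
    (hVpos : ∀ s ∈ Set.Ioo (-1 : ℝ) 1, 0 < V s)
    (hU2 : ContDiffOn ℝ 2 U (Set.Ioo (-1 : ℝ) 1))
    (hV2 : ContDiffOn ℝ 2 V (Set.Ioo (-1 : ℝ) 1))
    (F1 F2 F3 : ℝ → ℝ → ℝ → ℝ)
    (hF1 : ∀ y s w : ℝ, F1 y s w =
      -(b / 2 - 1) * w ^ 2 + (b - a) * (1 - s ^ 2) ^ a * (U s - y ^ 2 / 2))
    (hF2 : ∀ y s w : ℝ, F2 y s w = (1 / lam) * (1 - s ^ 2) ^ (a / 2) * w)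
    (hF3 : ∀ y s w : ℝ, F3 y s w =
      (a / 2 - 1) * (1 - s ^ 2) ^ a * y * w
      + (1 / (2 * lam)) * (1 - s ^ 2) ^ (a / 2 - 1)
          * ((1 - s ^ 2) * deriv V s / V s - 2 * a * s) * w ^ 2
      + (1 / lam) * (1 - s ^ 2) ^ (3 * a / 2)
          * (deriv U s - (deriv V s / V s) * (U s - y ^ 2 / 2)))
    (se : ℝ) (hse : se ∈ Set.Ioo (-1 : ℝ) 1)
    (hcrit : deriv U se = 0) (hconv : 0 < deriv (deriv U) se)
    (yp ym : ℝ) (hyp : yp = Real.sqrt (2 * U se)) (hym : ym = -Real.sqrt (2 * U se))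
    (Jp Jm : Matrix (Fin 3) (Fin 3) ℝ)
    (hJp : Jp = Matrix.of
      ![![deriv (fun y => F1 y se 0) yp, deriv (fun s => F1 yp s 0) se,
          deriv (fun w => F1 yp se w) 0],
        ![deriv (fun y => F2 y se 0) yp, deriv (fun s => F2 yp s 0) se,
          deriv (fun w => F2 yp se w) 0],
        ![deriv (fun y => F3 y se 0) yp, deriv (fun s => F3 yp s 0) se,
          deriv (fun w => F3 yp se w) 0]])
    (hJm : Jm = Matrix.of
      ![![deriv (fun y => F1 y se 0) ym, deriv (fun s => F1 ym s 0) se,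
          deriv (fun w => F1 ym se w) 0],
        ![deriv (fun y => F2 y se 0) ym, deriv (fun s => F2 ym s 0) se,
          deriv (fun w => F2 ym se w) 0],
        ![deriv (fun y => F3 y se 0) ym, deriv (fun s => F3 ym s 0) se,
          deriv (fun w => F3 ym se w) 0]]) :
    (∃ ξ₂ ξ₃ : ℝ,
      Jp.charpoly =
        (X - C (-(b - a) * (1 - se ^ 2) ^ a * Real.sqrt (2 * U se)))
          * (X - C ξ₂) * (X - C ξ₃) ∧
      -(b - a) * (1 - se ^ 2) ^ a * Real.sqrt (2 * U se) < 0 ∧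
      ξ₂ < 0 ∧ 0 < ξ₃) ∧
    (∃ η₁ η₂ η₃ : ℝ,
      Jm.charpoly = (X - C η₁) * (X - C η₂) * (X - C η₃) ∧
      0 < η₁ ∧ 0 < η₂ ∧ η₃ < 0) := by
  obtain rfl : F1 = field₁ a b U := funext fun y => funext fun s => funext (hF1 y s)
  obtain rfl : F2 = fun _ => field₂ a lam := funext fun y => funext fun s => funext (hF2 y s)
  obtain rfl : F3 = field₃ a lam U V := funext fun y => funext fun s => funext (hF3 y s)
  subst hJp hJm hyp hym
  have hU : ContDiffAt ℝ 2 U se := hU2.contDiffAt (Ioo_mem_nhds hse.1 hse.2)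
  have hV : ContDiffAt ℝ 2 V se := hV2.contDiffAt (Ioo_mem_nhds hse.1 hse.2)
  have hU0 : 0 < 2 * U se := mul_pos two_pos (hUpos se hse)
  have hsq : √(2 * U se) ^ 2 = 2 * U se := sq_sqrt hU0.le
  have hξ₁ : 0 < (b - a) * (1 - se ^ 2) ^ a * √(2 * U se) :=
    mul_pos (mul_pos (by linarith only [hab]) (rpow_pos_of_pos (one_sub_sq_pos hse) a))
      (sqrt_pos.2 hU0)
  obtain ⟨ξ₂, ξ₃, hp, hξ₂, hξ₃⟩ := exists_charpoly_jacobian_eq a b hlam.1.ne' hse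
    hU hV (hVpos se hse).ne' hcrit hconv hsq
  obtain ⟨η₃, η₂, hm, hη₃, hη₂⟩ := exists_charpoly_jacobian_eq a b hlam.1.ne' hse
    hU hV (hVpos se hse).ne' hcrit hconv ((neg_sq _).trans hsq)
  exact ⟨⟨ξ₂, ξ₃, hp, by linarith only [hξ₁], hξ₂, hξ₃⟩,
    -(b - a) * (1 - se ^ 2) ^ a * -√(2 * U se), η₂, η₃, hm.trans (by ring),
    by linarith only [hξ₁], hη₂, hη₃⟩

/-- Hyperbolicity of the 1+1+1 escape equilibria: at
`P^+ = (√(2Ũ(s_e)), s_e, 0)` the Jacobian of the vector field has three real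
nonzero eigenvalues, one being `ξ₁ = −(b−a)(1−s_e²)^a √(2Ũ(s_e))`, with exactly
one positive eigenvalue; at `P^−` exactly one eigenvalue is negative. -/
theorem escape_equilibria_hyperbolic
    (a b : ℝ) (ha : 4 < a) (hab : a < b - 1)
    (lam : ℝ) (hlam : lam ∈ Set.Ioo 0 (Real.pi / 4))
    (U V : ℝ → ℝ)
    (hUpos : ∀ s ∈ Set.Ioo (-1 : ℝ) 1, 0 < U s)
    (hVpos : ∀ s ∈ Set.Ioo (-1 : ℝ) 1, 0 < V s)
    (hU2 : ContDiffOn ℝ 2 U (Set.Ioo (-1 : ℝ) 1))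
    (hV2 : ContDiffOn ℝ 2 V (Set.Ioo (-1 : ℝ) 1))
    (F1 F2 F3 : ℝ → ℝ → ℝ → ℝ)
    (hF1 : ∀ y s w : ℝ, F1 y s w =
      -(b / 2 - 1) * w ^ 2 + (b - a) * (1 - s ^ 2) ^ a * (U s - y ^ 2 / 2))
    (hF2 : ∀ y s w : ℝ, F2 y s w = (1 / lam) * (1 - s ^ 2) ^ (a / 2) * w)
    (hF3 : ∀ y s w : ℝ, F3 y s w =
      (a / 2 - 1) * (1 - s ^ 2) ^ a * y * w
      + (1 / (2 * lam)) * (1 - s ^ 2) ^ (a / 2 - 1)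
          * ((1 - s ^ 2) * deriv V s / V s - 2 * a * s) * w ^ 2
      + (1 / lam) * (1 - s ^ 2) ^ (3 * a / 2)
          * (deriv U s - (deriv V s / V s) * (U s - y ^ 2 / 2)))
    (se : ℝ) (hse : se ∈ Set.Ioo (-1 : ℝ) 1)
    (hcrit : deriv U se = 0) (hconv : 0 < deriv (deriv U) se)
    (yp ym : ℝ) (hyp : yp = Real.sqrt (2 * U se)) (hym : ym = -Real.sqrt (2 * U se))
    (Jp Jm : Matrix (Fin 3) (Fin 3) ℝ)
    (hJp : Jp = Matrix.of
      ![![deriv (fun y => F1 y se 0) yp, deriv (fun s => F1 yp s 0) se,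
          deriv (fun w => F1 yp se w) 0],
        ![deriv (fun y => F2 y se 0) yp, deriv (fun s => F2 yp s 0) se,
          deriv (fun w => F2 yp se w) 0],
        ![deriv (fun y => F3 y se 0) yp, deriv (fun s => F3 yp s 0) se,
          deriv (fun w => F3 yp se w) 0]])
    (hJm : Jm = Matrix.of
      ![![deriv (fun y => F1 y se 0) ym, deriv (fun s => F1 ym s 0) se,
          deriv (fun w => F1 ym se w) 0],
        ![deriv (fun y => F2 y se 0) ym, deriv (fun s => F2 ym s 0) se,
          deriv (fun w => F2 ym se w) 0],
        ![deriv (fun y => F3 y se 0) ym, deriv (fun s => F3 ym s 0) se,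
          deriv (fun w => F3 ym se w) 0]]) :
    (∃ ξ₂ ξ₃ : ℝ,
      Jp.charpoly =
        (X - C (-(b - a) * (1 - se ^ 2) ^ a * Real.sqrt (2 * U se)))
          * (X - C ξ₂) * (X - C ξ₃) ∧
      -(b - a) * (1 - se ^ 2) ^ a * Real.sqrt (2 * U se) < 0 ∧
      ξ₂ < 0 ∧ 0 < ξ₃) ∧
    (∃ η₁ η₂ η₃ : ℝ,
      Jm.charpoly = (X - C η₁) * (X - C η₂) * (X - C η₃) ∧
      0 < η₁ ∧ 0 < η₂ ∧ η₃ < 0) :=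
  escape_equilibria_hyperbolic_general a b hab lam hlam U V hUpos hVpos hU2 hV2 F1 F2 F3 hF1 hF2 hF3
    se hse hcrit hconv yp ym hyp hym Jp Jm hJp hJm
end

section
/- The zero-energy infinity manifold M = {(y,s,w) ∈ ℝ × (−1,1) × ℝ : G(y,s,w) = 0}, where G(y,s,w) = (1−s²)^a (Ũ(s) − y²/2) − w²/2, is invariant under the regularized reduced zero-energy system: there is a continuous function c(y,s,w) such that ∇G·F = c·G identically (F the vector field of the system), and hence every solution with G = 0 at some time has G ≡ 0 on its whole interval of existence. Moreover, along every solution contained in M one has y'(σ) = −(a/2 − 1) w(σ)² ≤ 0, so y is non-increasing along the flow on the infinity manifold. -/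
/-!
With `x = 1 - s²` and `p = x ^ (a/2 - 1)`, every power of `x` occurring in the vector field and in
`∇G` is a monomial `p ^ n * x ^ m`, so `∇G · F = c · G` becomes a polynomial identity. Along a
solution, `g σ = G (y σ) (s σ) (w σ)` therefore solves the linear equation `g' = c g` with `c`
continuous along the curve, and Grönwall's inequality (forwards and, after reversing time,
backwards) shows that `g` vanishes on the whole interval once it vanishes at one time. On `G = 0`
the term `(1 - s²)^a (Ũ - y²/2)` of `y'` equals `w²/2`, which gives `y' = -(a/2 - 1) w²`.
-/

open Set

lemma Real.rpow_natCast_mul_add_natCast {x : ℝ} (hx : 0 < x) (r : ℝ) (n m : ℕ) :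
    x ^ (n * r + m) = (x ^ r) ^ n * x ^ m := by
  rw [rpow_add hx, rpow_natCast, mul_comm (n : ℝ), rpow_mul_natCast hx.le]

lemma one_sub_sq_pos_of_mem_Ioo {s : ℝ} (hs : s ∈ Ioo (-1) 1) : 0 < 1 - s ^ 2 := by
  nlinarith [hs.1, hs.2]

lemma eq_zero_of_hasDerivAt_eq_mul_self {g C : ℝ → ℝ} {α β : ℝ}
    (hC : ContinuousOn C (Icc α β)) (hg : ∀ t ∈ Icc α β, HasDerivAt g (C t * g t) t)
    (hα : g α = 0) : ∀ t ∈ Icc α β, g t = 0 := by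
  obtain ⟨K, hK⟩ := isCompact_Icc.exists_bound_of_continuousOn hC
  refine eq_zero_of_abs_deriv_le_mul_abs_self_of_eq_zero_right (K := K)
    (fun t ht => (hg t ht).continuousAt.continuousWithinAt)
    (fun t ht => (hg t (Ico_subset_Icc_self ht)).hasDerivWithinAt) hα fun t ht => ?_
  rw [norm_mul]
  gcongr
  exact hK t (Ico_subset_Icc_self ht)

lemma eqOn_zero_of_hasDerivAt_eq_mul_self {g C : ℝ → ℝ} {I : Set ℝ} (hI : I.OrdConnected)
    (hC : ContinuousOn C I) (hg : ∀ t ∈ I, HasDerivAt g (C t * g t) t) {t₀ : ℝ} (ht₀ : t₀ ∈ I)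
    (h0 : g t₀ = 0) : ∀ t ∈ I, g t = 0 := by
  intro t ht
  rcases le_total t₀ t with h | h
  · exact eq_zero_of_hasDerivAt_eq_mul_self (hC.mono (hI.out ht₀ ht))
      (fun u hu => hg u (hI.out ht₀ ht hu)) h0 t ⟨h, le_rfl⟩
  · have hmem : ∀ u ∈ Icc (-t₀) (-t), -u ∈ I := fun u hu =>
      hI.out ht ht₀ ⟨by linarith [hu.2], by linarith [hu.1]⟩
    have hrev := eq_zero_of_hasDerivAt_eq_mul_self
      (g := fun u => g (-u)) (C := fun u => -C (-u)) ((hC.comp continuousOn_neg hmem).neg)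
      (fun u hu => ((hg (-u) (hmem u hu)).comp u (hasDerivAt_neg u)).congr_deriv (by ring))
      (by simpa using h0) (-t) ⟨neg_le_neg h, le_rfl⟩
    simpa using hrev

namespace InfinityManifold

noncomputable section

def constraint (a : ℝ) (U : ℝ → ℝ) (y s w : ℝ) : ℝ :=
  (1 - s ^ 2) ^ a * (U s - y ^ 2 / 2) - w ^ 2 / 2

def fieldY (a b : ℝ) (U : ℝ → ℝ) (y s w : ℝ) : ℝ :=
  -(b / 2 - 1) * w ^ 2 + (b - a) * (1 - s ^ 2) ^ a * (U s - y ^ 2 / 2)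

def fieldS (a lam : ℝ) (s w : ℝ) : ℝ := (1 / lam) * (1 - s ^ 2) ^ (a / 2) * w

def fieldW (a lam : ℝ) (U V : ℝ → ℝ) (y s w : ℝ) : ℝ :=
  (a / 2 - 1) * (1 - s ^ 2) ^ a * y * w
    + (1 / (2 * lam)) * (1 - s ^ 2) ^ (a / 2 - 1)
        * ((1 - s ^ 2) * deriv V s / V s - 2 * a * s) * w ^ 2
    + (1 / lam) * (1 - s ^ 2) ^ (3 * a / 2)
        * (deriv U s - (deriv V s / V s) * (U s - y ^ 2 / 2))

def constraintLineDeriv (a : ℝ) (U : ℝ → ℝ) (y s w dy ds dw : ℝ) : ℝ :=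
  -((1 - s ^ 2) ^ a * y) * dy
    + (-(2 * s) * a * (1 - s ^ 2) ^ (a - 1) * (U s - y ^ 2 / 2)
        + (1 - s ^ 2) ^ a * deriv U s) * ds
    - w * dw

def multiplier (a b lam : ℝ) (V : ℝ → ℝ) (y s w : ℝ) : ℝ :=
  -(b - a) * y * (1 - s ^ 2) ^ a
    + (1 / lam) * (deriv V s / V s) * w * (1 - s ^ 2) ^ (a / 2)
    - (2 * a * s / lam) * w * (1 - s ^ 2) ^ (a / 2 - 1)

variable {a : ℝ} {U : ℝ → ℝ}

lemma constraintLineDeriv_field_eq_multiplier_mul (b lam : ℝ) (V : ℝ → ℝ) {y s w : ℝ}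
    (hs : 0 < 1 - s ^ 2) :
    constraintLineDeriv a U y s w (fieldY a b U y s w) (fieldS a lam s w) (fieldW a lam U V y s w)
    = multiplier a b lam V y s w * constraint a U y s w := by
  have hpow (n m : ℕ) {e : ℝ} (he : e = n * (a / 2 - 1) + m) :
      (1 - s ^ 2) ^ e = ((1 - s ^ 2) ^ (a / 2 - 1)) ^ n * (1 - s ^ 2) ^ m := by
    rw [he, Real.rpow_natCast_mul_add_natCast hs]
  unfold constraintLineDeriv fieldY fieldS fieldW multiplier constraint
  rw [hpow 2 2 (e := a) (by ring), hpow 2 1 (e := a - 1) (by ring),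
    hpow 1 1 (e := a / 2) (by ring), hpow 3 3 (e := 3 * a / 2) (by ring)]
  ring

lemma hasDerivAt_constraint_comp {y s w : ℝ → ℝ} {dy ds dw t : ℝ} (hy : HasDerivAt y dy t)
    (hs : HasDerivAt s ds t) (hw : HasDerivAt w dw t) (hst : 0 < 1 - s t ^ 2)
    (hU : DifferentiableAt ℝ U (s t)) :
    HasDerivAt (fun τ => constraint a U (y τ) (s τ) (w τ))
      (constraintLineDeriv a U (y t) (s t) (w t) dy ds dw) t := by
  have hx := ((hs.pow 2).const_sub 1).rpow_const (p := a) (Or.inl hst.ne')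
  have hG := (hx.mul ((hU.hasDerivAt.comp t hs).sub ((hy.pow 2).div_const 2))).sub
    ((hw.pow 2).div_const 2)
  refine hG.congr_deriv ?_
  simp only [constraintLineDeriv, Pi.sub_apply, Pi.pow_apply, Function.comp_apply]
  push_cast
  ring

lemma continuousOn_multiplier (b lam : ℝ) {V : ℝ → ℝ} (hV : ContDiffOn ℝ 1 V (Ioo (-1) 1))
    (hV0 : ∀ s ∈ Ioo (-1) 1, V s ≠ 0) :
    ContinuousOn (fun p : ℝ × ℝ × ℝ => multiplier a b lam V p.1 p.2.1 p.2.2)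
      (univ ×ˢ Ioo (-1) 1 ×ˢ univ) := by
  rintro ⟨y, s, w⟩ ⟨-, hs, -⟩
  have hx := one_sub_sq_pos_of_mem_Ioo hs
  have hVs : ContinuousAt V s := hV.continuousOn.continuousAt (isOpen_Ioo.mem_nhds hs)
  have hdVs : ContinuousAt (deriv V) s :=
    (hV.continuousOn_deriv_of_isOpen isOpen_Ioo le_rfl).continuousAt (isOpen_Ioo.mem_nhds hs)
  have hVs0 := hV0 s hs
  apply ContinuousAt.continuousWithinAt
  unfold multiplier
  fun_prop (disch := first | assumption | exact Or.inl hx.ne')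

lemma fieldY_eq_of_constraint_eq_zero (b : ℝ) {y s w : ℝ} (h : constraint a U y s w = 0) :
    fieldY a b U y s w = -(a / 2 - 1) * w ^ 2 := by
  unfold fieldY
  unfold constraint at h
  linear_combination (b - a) * h

lemma fieldY_nonpos_of_constraint_eq_zero (ha : 2 ≤ a) (b : ℝ) {y s w : ℝ}
    (h : constraint a U y s w = 0) : fieldY a b U y s w ≤ 0 := by
  rw [fieldY_eq_of_constraint_eq_zero b h]
  exact mul_nonpos_of_nonpos_of_nonneg (by linarith) (sq_nonneg w)

variable (b lam : ℝ) {V : ℝ → ℝ} (hU : DifferentiableOn ℝ U (Ioo (-1) 1))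
include hU

lemma deriv_constraint_dot_field_eq_multiplier_mul {y s w : ℝ} (hs : s ∈ Ioo (-1) 1) :
    deriv (fun y' => constraint a U y' s w) y * fieldY a b U y s w
      + deriv (fun s' => constraint a U y s' w) s * fieldS a lam s w
      + deriv (fun w' => constraint a U y s w') w * fieldW a lam U V y s w
    = multiplier a b lam V y s w * constraint a U y s w := by
  have hx := one_sub_sq_pos_of_mem_Ioo hs
  have hUs := hU.differentiableAt (isOpen_Ioo.mem_nhds hs)
  have hGy : HasDerivAt (fun y' => constraint a U y' s w)
      (constraintLineDeriv a U y s w 1 0 0) y :=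
    hasDerivAt_constraint_comp (hasDerivAt_id' y) (hasDerivAt_const y s) (hasDerivAt_const y w)
      hx hUs
  have hGs : HasDerivAt (fun s' => constraint a U y s' w)
      (constraintLineDeriv a U y s w 0 1 0) s :=
    hasDerivAt_constraint_comp (hasDerivAt_const s y) (hasDerivAt_id' s) (hasDerivAt_const s w)
      hx hUs
  have hGw : HasDerivAt (fun w' => constraint a U y s w')
      (constraintLineDeriv a U y s w 0 0 1) w :=
    hasDerivAt_constraint_comp (hasDerivAt_const w y) (hasDerivAt_const w s) (hasDerivAt_id' w)
      hx hUs
  rw [hGy.deriv, hGs.deriv, hGw.deriv,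
    ← constraintLineDeriv_field_eq_multiplier_mul b lam V hx]
  unfold constraintLineDeriv
  ring

lemma constraint_eq_zero_of_solution (hV : ContDiffOn ℝ 1 V (Ioo (-1) 1))
    (hV0 : ∀ s ∈ Ioo (-1) 1, V s ≠ 0) {I : Set ℝ} (hI : I.OrdConnected) {y s w : ℝ → ℝ}
    (hsI : ∀ σ ∈ I, s σ ∈ Ioo (-1) 1)
    (hy : ∀ σ ∈ I, HasDerivAt y (fieldY a b U (y σ) (s σ) (w σ)) σ)
    (hs : ∀ σ ∈ I, HasDerivAt s (fieldS a lam (s σ) (w σ)) σ)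
    (hw : ∀ σ ∈ I, HasDerivAt w (fieldW a lam U V (y σ) (s σ) (w σ)) σ)
    {σ₀ : ℝ} (hσ₀ : σ₀ ∈ I) (h0 : constraint a U (y σ₀) (s σ₀) (w σ₀) = 0) :
    ∀ σ ∈ I, constraint a U (y σ) (s σ) (w σ) = 0 := by
  have hcurve : ContinuousOn (fun σ => (y σ, s σ, w σ)) I := fun σ hσ =>
    ((hy σ hσ).continuousAt.prodMk ((hs σ hσ).continuousAt.prodMk
      (hw σ hσ).continuousAt)).continuousWithinAt
  have hmaps : MapsTo (fun σ => (y σ, s σ, w σ)) I (univ ×ˢ Ioo (-1) 1 ×ˢ univ) :=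
    fun σ hσ => ⟨trivial, hsI σ hσ, trivial⟩
  refine eqOn_zero_of_hasDerivAt_eq_mul_self hI
    ((continuousOn_multiplier (a := a) b lam hV hV0).comp hcurve hmaps) (fun σ hσ => ?_) hσ₀ h0
  have hx := one_sub_sq_pos_of_mem_Ioo (hsI σ hσ)
  dsimp only [Function.comp_apply]
  rw [← constraintLineDeriv_field_eq_multiplier_mul b lam V hx]
  exact hasDerivAt_constraint_comp (hy σ hσ) (hs σ hσ) (hw σ hσ) hx
    (hU.differentiableAt (isOpen_Ioo.mem_nhds (hsI σ hσ)))

end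

end InfinityManifold

open InfinityManifold

theorem infinity_manifold_invariant_zero_energy_general
    (a b : ℝ) (ha : 4 < a)
    (lam : ℝ)
    (U V : ℝ → ℝ)
    (hVpos : ∀ s ∈ Set.Ioo (-1 : ℝ) 1, 0 < V s)
    (hU2 : ContDiffOn ℝ 2 U (Set.Ioo (-1 : ℝ) 1))
    (hV2 : ContDiffOn ℝ 2 V (Set.Ioo (-1 : ℝ) 1))
    (F1 F2 F3 : ℝ → ℝ → ℝ → ℝ)
    (hF1 : ∀ y s w : ℝ, F1 y s w =
      -(b / 2 - 1) * w ^ 2 + (b - a) * (1 - s ^ 2) ^ a * (U s - y ^ 2 / 2))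
    (hF2 : ∀ y s w : ℝ, F2 y s w = (1 / lam) * (1 - s ^ 2) ^ (a / 2) * w)
    (hF3 : ∀ y s w : ℝ, F3 y s w =
      (a / 2 - 1) * (1 - s ^ 2) ^ a * y * w
      + (1 / (2 * lam)) * (1 - s ^ 2) ^ (a / 2 - 1)
          * ((1 - s ^ 2) * deriv V s / V s - 2 * a * s) * w ^ 2
      + (1 / lam) * (1 - s ^ 2) ^ (3 * a / 2)
          * (deriv U s - (deriv V s / V s) * (U s - y ^ 2 / 2)))
    (G : ℝ → ℝ → ℝ → ℝ)
    (hG : ∀ y s w : ℝ, G y s w = (1 - s ^ 2) ^ a * (U s - y ^ 2 / 2) - w ^ 2 / 2) :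
    (∃ c : ℝ → ℝ → ℝ → ℝ,
      ContinuousOn (fun p : ℝ × ℝ × ℝ => c p.1 p.2.1 p.2.2)
        (Set.univ ×ˢ Set.Ioo (-1 : ℝ) 1 ×ˢ Set.univ) ∧
      ∀ y w : ℝ, ∀ s ∈ Set.Ioo (-1 : ℝ) 1,
        deriv (fun y' => G y' s w) y * F1 y s w
          + deriv (fun s' => G y s' w) s * F2 y s w
          + deriv (fun w' => G y s w') w * F3 y s w
        = c y s w * G y s w) ∧
    (∀ (I : Set ℝ), I.OrdConnected → ∀ y s w : ℝ → ℝ,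
      (∀ σ ∈ I, s σ ∈ Set.Ioo (-1 : ℝ) 1) →
      (∀ σ ∈ I, HasDerivAt y (F1 (y σ) (s σ) (w σ)) σ) →
      (∀ σ ∈ I, HasDerivAt s (F2 (y σ) (s σ) (w σ)) σ) →
      (∀ σ ∈ I, HasDerivAt w (F3 (y σ) (s σ) (w σ)) σ) →
      ∀ σ₀ ∈ I, G (y σ₀) (s σ₀) (w σ₀) = 0 →
        ∀ σ ∈ I, G (y σ) (s σ) (w σ) = 0) ∧
    (∀ y w : ℝ, ∀ s ∈ Set.Ioo (-1 : ℝ) 1, G y s w = 0 →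
      F1 y s w = -(a / 2 - 1) * w ^ 2 ∧ F1 y s w ≤ 0) := by
  obtain rfl : G = constraint a U := by funext y s w; exact hG y s w
  obtain rfl : F1 = fieldY a b U := by funext y s w; exact hF1 y s w
  obtain rfl : F2 = fun _ => fieldS a lam := by funext y s w; exact hF2 y s w
  obtain rfl : F3 = fieldW a lam U V := by funext y s w; exact hF3 y s w
  have hU := hU2.differentiableOn (by norm_num)
  have hV : ContDiffOn ℝ 1 V (Set.Ioo (-1) 1) := hV2.of_le (by norm_num)
  have hV0 : ∀ s ∈ Set.Ioo (-1 : ℝ) 1, V s ≠ 0 := fun s hs => (hVpos s hs).ne'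
  refine ⟨⟨multiplier a b lam V, continuousOn_multiplier b lam hV hV0,
      fun y w s hs => deriv_constraint_dot_field_eq_multiplier_mul b lam hU hs⟩,
    fun I hI y s w hsI hy hs hw σ₀ hσ₀ h0 =>
      constraint_eq_zero_of_solution b lam hU hV hV0 hI hsI hy hs hw hσ₀ h0,
    fun y w s _ h =>
      ⟨fieldY_eq_of_constraint_eq_zero b h,
        fieldY_nonpos_of_constraint_eq_zero (by linarith) b h⟩⟩

/-- The zero-energy infinity manifold
`M = {G = 0}`, `G(y,s,w) = (1−s²)^a(Ũ(s) − y²/2) − w²/2`, is invariant: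
`∇G·F = c·G` for a continuous `c`, every solution with `G = 0` at some time has
`G ≡ 0`, and on `M` one has `y' = −(a/2 − 1)w² ≤ 0`. -/
theorem infinity_manifold_invariant_zero_energy
    (a b : ℝ) (ha : 4 < a) (hab : a < b - 1)
    (lam : ℝ) (hlam : lam ∈ Set.Ioo 0 (Real.pi / 4))
    (U V : ℝ → ℝ)
    (hUpos : ∀ s ∈ Set.Ioo (-1 : ℝ) 1, 0 < U s)
    (hVpos : ∀ s ∈ Set.Ioo (-1 : ℝ) 1, 0 < V s)
    (hU2 : ContDiffOn ℝ 2 U (Set.Ioo (-1 : ℝ) 1))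
    (hV2 : ContDiffOn ℝ 2 V (Set.Ioo (-1 : ℝ) 1))
    (F1 F2 F3 : ℝ → ℝ → ℝ → ℝ)
    (hF1 : ∀ y s w : ℝ, F1 y s w =
      -(b / 2 - 1) * w ^ 2 + (b - a) * (1 - s ^ 2) ^ a * (U s - y ^ 2 / 2))
    (hF2 : ∀ y s w : ℝ, F2 y s w = (1 / lam) * (1 - s ^ 2) ^ (a / 2) * w)
    (hF3 : ∀ y s w : ℝ, F3 y s w =
      (a / 2 - 1) * (1 - s ^ 2) ^ a * y * w
      + (1 / (2 * lam)) * (1 - s ^ 2) ^ (a / 2 - 1)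
          * ((1 - s ^ 2) * deriv V s / V s - 2 * a * s) * w ^ 2
      + (1 / lam) * (1 - s ^ 2) ^ (3 * a / 2)
          * (deriv U s - (deriv V s / V s) * (U s - y ^ 2 / 2)))
    (G : ℝ → ℝ → ℝ → ℝ)
    (hG : ∀ y s w : ℝ, G y s w = (1 - s ^ 2) ^ a * (U s - y ^ 2 / 2) - w ^ 2 / 2) :
    (∃ c : ℝ → ℝ → ℝ → ℝ,
      ContinuousOn (fun p : ℝ × ℝ × ℝ => c p.1 p.2.1 p.2.2)
        (Set.univ ×ˢ Set.Ioo (-1 : ℝ) 1 ×ˢ Set.univ) ∧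
      ∀ y w : ℝ, ∀ s ∈ Set.Ioo (-1 : ℝ) 1,
        deriv (fun y' => G y' s w) y * F1 y s w
          + deriv (fun s' => G y s' w) s * F2 y s w
          + deriv (fun w' => G y s w') w * F3 y s w
        = c y s w * G y s w) ∧
    (∀ (I : Set ℝ), I.OrdConnected → ∀ y s w : ℝ → ℝ,
      (∀ σ ∈ I, s σ ∈ Set.Ioo (-1 : ℝ) 1) →
      (∀ σ ∈ I, HasDerivAt y (F1 (y σ) (s σ) (w σ)) σ) →
      (∀ σ ∈ I, HasDerivAt s (F2 (y σ) (s σ) (w σ)) σ) →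
      (∀ σ ∈ I, HasDerivAt w (F3 (y σ) (s σ) (w σ)) σ) →
      ∀ σ₀ ∈ I, G (y σ₀) (s σ₀) (w σ₀) = 0 →
        ∀ σ ∈ I, G (y σ) (s σ) (w σ) = 0) ∧
    (∀ y w : ℝ, ∀ s ∈ Set.Ioo (-1 : ℝ) 1, G y s w = 0 →
      F1 y s w = -(a / 2 - 1) * w ^ 2 ∧ F1 y s w ≤ 0) :=
  infinity_manifold_invariant_zero_energy_general a b ha lam U V hVpos hU2 hV2 F1 F2 F3 hF1 hF2 hF3
    G hG
end

section
/- Existence of a heteroclinic orbit between the two 1+1+1 escape equilibria for mass-symmetric systems: assume Ũ'(0) = 0 and Ṽ'(0) = 0 (as holds when Ũ and Ṽ are even). Then the line {(y,0,0) : y ∈ ℝ} is invariant under the regularized reduced zero-energy system, the motion on it obeys y' = (b−a)(Ũ(0) − y²/2), and there exists a solution σ ↦ (y(σ), 0, 0) defined for all σ ∈ ℝ with lim_{σ→−∞} y(σ) = −√(2Ũ(0)) and lim_{σ→+∞} y(σ) = +√(2Ũ(0)); i.e., a heteroclinic orbit connecting the equilibrium P^− = (−√(2Ũ(0)), 0,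 0) to P^+ = (√(2Ũ(0)), 0, 0). -/
open Real

/-- Existence of a heteroclinic orbit between the two 1+1+1 escape
equilibria for mass-symmetric systems: if `Ũ'(0) = 0` and `Ṽ'(0) = 0` then the
line `{(y,0,0)}` is invariant, on it `y' = (b−a)(Ũ(0) − y²/2)`, and there is a
solution defined on all of `ℝ` with `y(σ) → ∓√(2Ũ(0))` as `σ → ∓∞`. -/
theorem heteroclinic_orbit_exists
    (a b : ℝ) (ha : 4 < a) (hab : a < b - 1)
    (lam : ℝ) (hlam : lam ∈ Set.Ioo 0 (Real.pi / 4))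
    (U V : ℝ → ℝ)
    (hUpos : ∀ s ∈ Set.Ioo (-1 : ℝ) 1, 0 < U s)
    (hVpos : ∀ s ∈ Set.Ioo (-1 : ℝ) 1, 0 < V s)
    (hU2 : ContDiffOn ℝ 2 U (Set.Ioo (-1 : ℝ) 1))
    (hV2 : ContDiffOn ℝ 2 V (Set.Ioo (-1 : ℝ) 1))
    (hU0 : deriv U 0 = 0) (hV0 : deriv V 0 = 0)
    (F1 F2 F3 : ℝ → ℝ → ℝ → ℝ)
    (hF1 : ∀ y s w : ℝ, F1 y s w =
      -(b / 2 - 1) * w ^ 2 + (b - a) * (1 - s ^ 2) ^ a * (U s - y ^ 2 / 2))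
    (hF2 : ∀ y s w : ℝ, F2 y s w = (1 / lam) * (1 - s ^ 2) ^ (a / 2) * w)
    (hF3 : ∀ y s w : ℝ, F3 y s w =
      (a / 2 - 1) * (1 - s ^ 2) ^ a * y * w
      + (1 / (2 * lam)) * (1 - s ^ 2) ^ (a / 2 - 1)
          * ((1 - s ^ 2) * deriv V s / V s - 2 * a * s) * w ^ 2
      + (1 / lam) * (1 - s ^ 2) ^ (3 * a / 2)
          * (deriv U s - (deriv V s / V s) * (U s - y ^ 2 / 2))) :
    (∀ y : ℝ, F2 y 0 0 = 0 ∧ F3 y 0 0 = 0) ∧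
    (∀ y : ℝ, F1 y 0 0 = (b - a) * (U 0 - y ^ 2 / 2)) ∧
    (∃ y : ℝ → ℝ,
      (∀ σ : ℝ, HasDerivAt y ((b - a) * (U 0 - y σ ^ 2 / 2)) σ) ∧
      Filter.Tendsto y Filter.atBot (nhds (-Real.sqrt (2 * U 0))) ∧
      Filter.Tendsto y Filter.atTop (nhds (Real.sqrt (2 * U 0)))) := by
  have hU : 0 < U 0 := hUpos 0 ⟨by norm_num, by norm_num⟩
  set r : ℝ := Real.sqrt (2 * U 0) with hrdef
  have hr2 : r ^ 2 = 2 * U 0 := Real.sq_sqrt (by linarith)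
  have hr : 0 < r := Real.sqrt_pos.mpr (by linarith)
  have hc : 0 < b - a := by linarith
  set k : ℝ := (b - a) * r with hkdef
  have hk : 0 < k := mul_pos hc hr
  refine ⟨fun y => ⟨by simp [hF2], by simp [hF3, hU0, hV0]⟩,
    fun y => by simp [hF1], ?_⟩
  refine ⟨fun σ => r - 2 * r / (Real.exp (k * σ) + 1), fun σ => ?_, ?_, ?_⟩
  · have hE : (0:ℝ) < Real.exp (k * σ) + 1 := by positivity
    have hexp : HasDerivAt (fun σ : ℝ => Real.exp (k * σ) + 1)
        (Real.exp (k * σ) * k) σ := by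
      simpa using ((hasDerivAt_id σ).const_mul k).exp.add_const 1
    have hdiv : HasDerivAt (fun σ : ℝ => r - 2 * r / (Real.exp (k * σ) + 1))
        (0 - (0 * (Real.exp (k * σ) + 1) - 2 * r * (Real.exp (k * σ) * k)) /
          (Real.exp (k * σ) + 1) ^ 2) σ :=
      (hasDerivAt_const σ r).sub (((hasDerivAt_const σ (2 * r)).div hexp hE.ne'))
    convert hdiv using 1
    have hU0eq : U 0 = r ^ 2 / 2 := by linarith [hr2]
    rw [hU0eq, hkdef]
    field_simp
    ring
  · have h1 : Filter.Tendsto (fun σ : ℝ => Real.exp (k * σ)) Filter.atBot (nhds 0) :=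
      Real.tendsto_exp_atBot.comp (Filter.tendsto_id.const_mul_atBot hk)
    have h2 : Filter.Tendsto (fun σ : ℝ => r - 2 * r / (Real.exp (k * σ) + 1))
        Filter.atBot (nhds (r - 2 * r / (0 + 1))) :=
      tendsto_const_nhds.sub (tendsto_const_nhds.div (h1.add tendsto_const_nhds)
        (by norm_num))
    convert h2 using 2
    rw [hrdef]; ring
  · have h1 : Filter.Tendsto (fun σ : ℝ => Real.exp (k * σ) + 1) Filter.atTop
        Filter.atTop :=
      (Real.tendsto_exp_atTop.comp (Filter.tendsto_id.const_mul_atTop hk)).atTop_add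
        tendsto_const_nhds
    have h2 : Filter.Tendsto (fun σ : ℝ => r - 2 * r / (Real.exp (k * σ) + 1))
        Filter.atTop (nhds (r - 0)) := by
      refine tendsto_const_nhds.sub ?_
      simpa [div_eq_mul_inv] using
        (h1.inv_tendsto_atTop).const_mul (2 * r)
    simpa using h2
end

section
/- The flow on the positive-energy infinity manifold is gradient-like with respect to ṽ (Proposition 5.1): along every solution of the infinity-manifold system, ṽ'(σ) = (1 − s̃(σ)²)·ũ(σ)² ≥ 0, so ṽ is non-decreasing; moreover, if the solution is non-constant then ṽ'(σ) > 0 for every σ, i.e. ṽ is strictly increasing along every non-equilibrium solution. -/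
/-!
Along a solution, `F = (1 - s̃²) ũ²` is `ṽ'`, and the system gives `F' = c F` with the continuous
coefficient `c = -(2/λ) s̃ ũ - 2 (1 - s̃²) ṽ`. It is nonnegative because `|s̃| ≤ 1`, so `ṽ` is
monotone. If `F` vanished at one time, uniqueness for this linear ODE would force `F ≡ 0`, hence
`(1 - s̃²) ũ ≡ 0`, so all three right-hand sides vanish and the solution is an equilibrium.
-/

open Set

section LinearODE

variable {E : Type*} [NormedAddCommGroup E] [NormedSpace ℝ E] {f : ℝ → E} {c : ℝ → ℝ}

theorem eqOn_zero_of_hasDerivAt_smul_self {a b t₀ : ℝ} (hc : ContinuousOn c (Icc a b))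
    (hf : ∀ t ∈ Icc a b, HasDerivAt f (c t • f t) t) (ht₀ : t₀ ∈ Icc a b) (h₀ : f t₀ = 0) :
    EqOn f 0 (Icc a b) := by
  obtain ⟨K, hK⟩ := isCompact_Icc.exists_bound_of_continuousOn hc
  have hlip : ∀ t ∈ Icc a b, LipschitzOnWith K.toNNReal (c t • · : E → E) univ := by
    intro t ht
    refine ((lipschitzWith_smul (c t)).weaken ?_).lipschitzOnWith
    rw [← NNReal.coe_le_coe, coe_nnnorm, Real.coe_toNNReal']
    exact (hK t ht).trans (le_max_left _ _)
  have hfc : ContinuousOn f (Icc a b) := HasDerivAt.continuousOn hf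
  have hzero : ∀ t, HasDerivAt (0 : ℝ → E) (c t • (0 : ℝ → E) t) t := fun t => by simp
  have hleft : Ioc a t₀ ⊆ Icc a b := Ioc_subset_Icc_self.trans (Icc_subset_Icc_right ht₀.2)
  have hright : Ico t₀ b ⊆ Icc a b := Ico_subset_Icc_self.trans (Icc_subset_Icc_left ht₀.1)
  rw [← Icc_union_Icc_eq_Icc ht₀.1 ht₀.2]
  refine EqOn.union ?_ ?_
  · exact ODE_solution_unique_of_mem_Icc_left (s := fun _ => univ) (fun t ht => hlip t (hleft ht))
      (hfc.mono (Icc_subset_Icc_right ht₀.2)) (fun t ht => (hf t (hleft ht)).hasDerivWithinAt)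
      (fun _ _ => mem_univ _) continuousOn_const (fun t _ => (hzero t).hasDerivWithinAt)
      (fun _ _ => mem_univ _) h₀
  · exact ODE_solution_unique_of_mem_Icc_right (s := fun _ => univ) (fun t ht => hlip t (hright ht))
      (hfc.mono (Icc_subset_Icc_left ht₀.1)) (fun t ht => (hf t (hright ht)).hasDerivWithinAt)
      (fun _ _ => mem_univ _) continuousOn_const (fun t _ => (hzero t).hasDerivWithinAt)
      (fun _ _ => mem_univ _) h₀

variable {I : Set ℝ}

theorem Set.OrdConnected.eqOn_zero_of_hasDerivAt_smul_self (hI : I.OrdConnected)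
    (hc : ContinuousOn c I) (hf : ∀ t ∈ I, HasDerivAt f (c t • f t) t) {t₀ : ℝ} (ht₀ : t₀ ∈ I)
    (h₀ : f t₀ = 0) : EqOn f 0 I := fun _ ht =>
  have hsub := hI.uIcc_subset ht₀ ht
  _root_.eqOn_zero_of_hasDerivAt_smul_self (hc.mono hsub) (fun x hx => hf x (hsub hx))
    left_mem_uIcc h₀ right_mem_uIcc

theorem Set.OrdConnected.eq_of_hasDerivAt_zero (hI : I.OrdConnected)
    (hf : ∀ t ∈ I, HasDerivAt f 0 t) {x y : ℝ} (hx : x ∈ I) (hy : y ∈ I) : f x = f y := by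
  have := hI.convex.norm_image_sub_le_of_norm_hasDerivWithin_le
    (fun t ht => (hf t ht).hasDerivWithinAt) (fun _ _ => norm_zero.le) hx hy
  rw [zero_mul, norm_le_zero_iff, sub_eq_zero] at this
  exact this.symm

end LinearODE

structure IsInfinityManifoldSolution (lam : ℝ) (I : Set ℝ) (v s u : ℝ → ℝ) : Prop where
  hasDerivAt_v : ∀ σ ∈ I, HasDerivAt v ((1 - s σ ^ 2) * u σ ^ 2) σ
  hasDerivAt_s : ∀ σ ∈ I, HasDerivAt s ((1 / lam) * (1 - s σ ^ 2) * u σ) σ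
  hasDerivAt_u : ∀ σ ∈ I, HasDerivAt u (-((1 - s σ ^ 2) * u σ * v σ)) σ

namespace IsInfinityManifoldSolution

variable {lam : ℝ} {I : Set ℝ} {v s u : ℝ → ℝ}

theorem hasDerivAt_one_sub_sq_mul_sq (h : IsInfinityManifoldSolution lam I v s u) {σ : ℝ}
    (hσ : σ ∈ I) :
    HasDerivAt (fun t => (1 - s t ^ 2) * u t ^ 2)
      ((-(2 / lam) * s σ * u σ - 2 * (1 - s σ ^ 2) * v σ) * ((1 - s σ ^ 2) * u σ ^ 2)) σ := by
  have := (((h.hasDerivAt_s σ hσ).fun_pow 2).const_sub 1).mul ((h.hasDerivAt_u σ hσ).fun_pow 2)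
  refine this.congr_deriv ?_
  ring

theorem eqOn_zero_of_eq_zero (h : IsInfinityManifoldSolution lam I v s u) (hI : I.OrdConnected)
    {σ₀ : ℝ} (hσ₀ : σ₀ ∈ I) (h₀ : (1 - s σ₀ ^ 2) * u σ₀ ^ 2 = 0) :
    EqOn (fun σ => (1 - s σ ^ 2) * u σ ^ 2) 0 I := by
  have hv := HasDerivAt.continuousOn h.hasDerivAt_v
  have hs := HasDerivAt.continuousOn h.hasDerivAt_s
  have hu := HasDerivAt.continuousOn h.hasDerivAt_u
  exact hI.eqOn_zero_of_hasDerivAt_smul_self (by fun_prop)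
    (fun σ hσ => h.hasDerivAt_one_sub_sq_mul_sq hσ) hσ₀ h₀

theorem eq_of_eqOn_zero (h : IsInfinityManifoldSolution lam I v s u) (hI : I.OrdConnected)
    (h₀ : EqOn (fun σ => (1 - s σ ^ 2) * u σ ^ 2) 0 I) {σ₁ σ₂ : ℝ} (hσ₁ : σ₁ ∈ I) (hσ₂ : σ₂ ∈ I) :
    v σ₁ = v σ₂ ∧ s σ₁ = s σ₂ ∧ u σ₁ = u σ₂ := by
  have hflux : ∀ σ ∈ I, (1 - s σ ^ 2) * u σ = 0 := fun σ hσ => by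
    have := h₀ hσ
    simp only [Pi.zero_apply] at this
    exact pow_eq_zero_iff (n := 2) two_ne_zero |>.1 (by linear_combination (1 - s σ ^ 2) * this)
  refine ⟨hI.eq_of_hasDerivAt_zero (fun σ hσ => ?_) hσ₁ hσ₂,
    hI.eq_of_hasDerivAt_zero (fun σ hσ => ?_) hσ₁ hσ₂,
    hI.eq_of_hasDerivAt_zero (fun σ hσ => ?_) hσ₁ hσ₂⟩
  · simpa [h₀ hσ] using h.hasDerivAt_v σ hσ
  · simpa [mul_assoc, hflux σ hσ] using h.hasDerivAt_s σ hσ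
  · simpa [hflux σ hσ] using h.hasDerivAt_u σ hσ

end IsInfinityManifoldSolution

theorem infinity_manifold_gradientlike_general
    (lam : ℝ)
    (I : Set ℝ) (hI : I.OrdConnected)
    (v s u : ℝ → ℝ)
    (hrange : ∀ σ ∈ I, s σ ∈ Set.Icc (-1 : ℝ) 1)
    (hv : ∀ σ ∈ I, HasDerivAt v ((1 - s σ ^ 2) * u σ ^ 2) σ)
    (hs : ∀ σ ∈ I, HasDerivAt s ((1 / lam) * (1 - s σ ^ 2) * u σ) σ)
    (hu : ∀ σ ∈ I, HasDerivAt u (-((1 - s σ ^ 2) * u σ * v σ)) σ) :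
    (∀ σ ∈ I, 0 ≤ (1 - s σ ^ 2) * u σ ^ 2) ∧
    MonotoneOn v I ∧
    ((¬ ∀ σ₁ ∈ I, ∀ σ₂ ∈ I,
        v σ₁ = v σ₂ ∧ s σ₁ = s σ₂ ∧ u σ₁ = u σ₂) →
      ∀ σ ∈ I, 0 < (1 - s σ ^ 2) * u σ ^ 2) := by
  have hsol : IsInfinityManifoldSolution lam I v s u := ⟨hv, hs, hu⟩
  have hnonneg : ∀ σ ∈ I, 0 ≤ (1 - s σ ^ 2) * u σ ^ 2 := fun σ hσ =>
    mul_nonneg (sub_nonneg.2 (sq_le_one_iff_abs_le_one _ |>.2 (abs_le.2 (hrange σ hσ))))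
      (sq_nonneg _)
  refine ⟨hnonneg, ?_, fun hne σ hσ => (hnonneg σ hσ).lt_of_ne fun h₀ => hne ?_⟩
  · exact monotoneOn_of_hasDerivWithinAt_nonneg hI.convex (HasDerivAt.continuousOn hv)
      (fun σ hσ => (hv σ (interior_subset hσ)).hasDerivWithinAt)
      (fun σ hσ => hnonneg σ (interior_subset hσ))
  · exact fun σ₁ hσ₁ σ₂ hσ₂ =>
      hsol.eq_of_eqOn_zero hI (hsol.eqOn_zero_of_eq_zero hI hσ h₀.symm) hσ₁ hσ₂

/-- The flow on the positive-energy infinity manifold is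
gradient-like with respect to `ṽ`: along every solution `ṽ' = (1 − s̃²)ũ² ≥ 0`,
so `ṽ` is non-decreasing, and along every non-constant solution `ṽ' > 0`
everywhere. -/
theorem infinity_manifold_gradientlike
    (lam : ℝ) (hlam : 0 < lam)
    (I : Set ℝ) (hI : I.OrdConnected)
    (v s u : ℝ → ℝ)
    (hrange : ∀ σ ∈ I, s σ ∈ Set.Icc (-1 : ℝ) 1)
    (hv : ∀ σ ∈ I, HasDerivAt v ((1 - s σ ^ 2) * u σ ^ 2) σ)
    (hs : ∀ σ ∈ I, HasDerivAt s ((1 / lam) * (1 - s σ ^ 2) * u σ) σ)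
    (hu : ∀ σ ∈ I, HasDerivAt u (-((1 - s σ ^ 2) * u σ * v σ)) σ) :
    (∀ σ ∈ I, 0 ≤ (1 - s σ ^ 2) * u σ ^ 2) ∧
    MonotoneOn v I ∧
    ((¬ ∀ σ₁ ∈ I, ∀ σ₂ ∈ I,
        v σ₁ = v σ₂ ∧ s σ₁ = s σ₂ ∧ u σ₁ = u σ₂) →
      ∀ σ ∈ I, 0 < (1 - s σ ^ 2) * u σ ^ 2) :=
  infinity_manifold_gradientlike_general lam I hI v s u hrange hv hs hu
end

section
/- There are no closed or recurrent orbits on the positive-energy infinity manifold (Corollary 5.2): every periodic solution of the infinity-manifold system is constant, i.e. an equilibrium; in particular the system has no nonconstant periodic orbits. -/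
open Real

/-- There are no closed or recurrent orbits on the positive-energy
infinity manifold: every periodic solution of the infinity-manifold system is
constant. -/
theorem no_periodic_orbits_on_infinity_manifold
    (lam : ℝ) (hlam : 0 < lam)
    (v s u : ℝ → ℝ)
    (hrange : ∀ σ : ℝ, s σ ∈ Set.Icc (-1 : ℝ) 1)
    (hv : ∀ σ : ℝ, HasDerivAt v ((1 - s σ ^ 2) * u σ ^ 2) σ)
    (hs : ∀ σ : ℝ, HasDerivAt s ((1 / lam) * (1 - s σ ^ 2) * u σ) σ)
    (hu : ∀ σ : ℝ, HasDerivAt u (-((1 - s σ ^ 2) * u σ * v σ)) σ)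
    (T : ℝ) (hT : 0 < T)
    (hper : ∀ σ : ℝ, v (σ + T) = v σ ∧ s (σ + T) = s σ ∧ u (σ + T) = u σ) :
    ∀ σ₁ σ₂ : ℝ, v σ₁ = v σ₂ ∧ s σ₁ = s σ₂ ∧ u σ₁ = u σ₂ := by
  -- nonnegativity of 1 - s²
  have hsq : ∀ σ, (0:ℝ) ≤ 1 - s σ ^ 2 := by
    intro σ
    obtain ⟨h1, h2⟩ := hrange σ
    nlinarith
  -- v is monotone
  have hdiff : Differentiable ℝ v := fun σ => (hv σ).differentiableAt
  have hmono : Monotone v := by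
    apply monotone_of_deriv_nonneg hdiff
    intro σ
    rw [(hv σ).deriv]
    exact mul_nonneg (hsq σ) (sq_nonneg _)
  -- periodicity with n*T
  have hpn : ∀ n : ℕ, ∀ σ : ℝ, v (σ + n * T) = v σ := by
    intro n
    induction n with
    | zero => intro σ; simp
    | succ k ih =>
        intro σ
        have : σ + (k + 1 : ℕ) * T = (σ + T) + k * T := by push_cast; ring
        rw [this, ih, (hper σ).1]
  -- v is constant
  have hvconst : ∀ a b : ℝ, v a = v b := by
    have key : ∀ a b : ℝ, a ≤ b → v a = v b := by
      intro a b hab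
      obtain ⟨n, hn⟩ := exists_nat_ge ((b - a) / T)
      have hble : b ≤ a + n * T := by
        have := (div_le_iff₀ hT).mp hn
        linarith
      have h1 : v a ≤ v b := hmono hab
      have h2 : v b ≤ v (a + n * T) := hmono hble
      rw [hpn n a] at h2
      linarith
    intro a b
    rcases le_total a b with h | h
    · exact key a b h
    · exact (key b a h).symm
  -- the key identity
  have hkey : ∀ σ : ℝ, (1 - s σ ^ 2) * u σ ^ 2 = 0 := by
    intro σ
    have hvc : v = fun _ => v 0 := funext fun x => hvconst x 0
    have h0 : HasDerivAt v 0 σ := by rw [hvc]; exact hasDerivAt_const _ _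
    exact ((hv σ).unique h0)
  have hkey2 : ∀ σ : ℝ, (1 - s σ ^ 2) * u σ = 0 := by
    intro σ
    have h : ((1 - s σ ^ 2) * u σ) ^ 2 = 0 := by
      have := hkey σ
      nlinarith [hsq σ]
    exact pow_eq_zero_iff (two_ne_zero).elim |>.mp h
  -- s and u are constant
  have hsconst : ∀ a b : ℝ, s a = s b := by
    intro a b
    apply is_const_of_deriv_eq_zero (fun σ => (hs σ).differentiableAt)
    intro σ
    rw [(hs σ).deriv, mul_assoc, hkey2 σ, mul_zero]
  have huconst : ∀ a b : ℝ, u a = u b := by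
    intro a b
    apply is_const_of_deriv_eq_zero (fun σ => (hu σ).differentiableAt)
    intro σ
    rw [(hu σ).deriv, hkey2 σ, zero_mul, neg_zero]
  exact fun σ₁ σ₂ => ⟨hvconst σ₁ σ₂, hsconst σ₁ σ₂, huconst σ₁ σ₂⟩
end

section
/- First integral of the flow on the positive-energy infinity manifold (the relation dχ/ds̃ = λ): along every solution of the infinity-manifold system, the quantity ṽ(σ)·cos(λ·s̃(σ)) − ũ(σ)·sin(λ·s̃(σ)) is constant in σ. -/
/-!
With `θ = λ s̃`, the derivative of `ṽ cos θ - ũ sin θ` is `(ṽ' - θ' ũ) cos θ - (ũ' + θ' ṽ) sin θ`.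
Along the system `θ' = (1 - s̃²) ũ`, so `ṽ' = θ' ũ` and `ũ' = -θ' ṽ`: both brackets vanish, and a
function with zero derivative on an interval is constant there.
-/

open Real

theorem Set.OrdConnected.eq_of_hasDerivAt_eq_zero {I : Set ℝ} (hI : I.OrdConnected) {f : ℝ → ℝ}
    (hf : ∀ x ∈ I, HasDerivAt f 0 x) {x y : ℝ} (hx : x ∈ I) (hy : y ∈ I) : f x = f y := by
  have h := hI.convex.norm_image_sub_le_of_norm_hasDerivWithin_le
    (fun z hz => (hf z hz).hasDerivWithinAt) (fun _ _ => norm_zero.le) hy hx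
  rwa [zero_mul, norm_le_zero_iff, sub_eq_zero] at h

noncomputable def infinityFirstIntegral (lam v s u : ℝ) : ℝ :=
  v * cos (lam * s) - u * sin (lam * s)

theorem hasDerivAt_infinityFirstIntegral {lam : ℝ} {v s u : ℝ → ℝ} {v' s' u' x : ℝ}
    (hv : HasDerivAt v v' x) (hs : HasDerivAt s s' x) (hu : HasDerivAt u u' x) :
    HasDerivAt (fun σ => infinityFirstIntegral lam (v σ) (s σ) (u σ))
      ((v' - lam * s' * u x) * cos (lam * s x) - (u' + lam * s' * v x) * sin (lam * s x)) x := by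
  have hθ := hs.const_mul lam
  exact ((hv.mul hθ.cos).sub (hu.mul hθ.sin)).congr_deriv (by ring)

theorem hasDerivAt_infinityFirstIntegral_eq_zero {lam : ℝ} (hlam : lam ≠ 0) {v s u : ℝ → ℝ}
    {w x : ℝ} (hv : HasDerivAt v (w * u x ^ 2) x) (hs : HasDerivAt s (1 / lam * w * u x) x)
    (hu : HasDerivAt u (-(w * u x * v x)) x) :
    HasDerivAt (fun σ => infinityFirstIntegral lam (v σ) (s σ) (u σ)) 0 x :=
  (hasDerivAt_infinityFirstIntegral hv hs hu).congr_deriv (by field_simp; ring)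

theorem infinity_manifold_first_integral_general
    (lam : ℝ) (hlam : 0 < lam)
    (I : Set ℝ) (hI : I.OrdConnected)
    (v s u : ℝ → ℝ)
    (hv : ∀ σ ∈ I, HasDerivAt v ((1 - s σ ^ 2) * u σ ^ 2) σ)
    (hs : ∀ σ ∈ I, HasDerivAt s ((1 / lam) * (1 - s σ ^ 2) * u σ) σ)
    (hu : ∀ σ ∈ I, HasDerivAt u (-((1 - s σ ^ 2) * u σ * v σ)) σ) :
    ∀ σ₁ ∈ I, ∀ σ₂ ∈ I,
      v σ₁ * Real.cos (lam * s σ₁) - u σ₁ * Real.sin (lam * s σ₁)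
        = v σ₂ * Real.cos (lam * s σ₂) - u σ₂ * Real.sin (lam * s σ₂) :=
  fun _ h₁ _ h₂ => hI.eq_of_hasDerivAt_eq_zero
    (fun σ hσ => hasDerivAt_infinityFirstIntegral_eq_zero hlam.ne' (hv σ hσ) (hs σ hσ) (hu σ hσ))
    h₁ h₂

/-- First integral of the flow on the positive-energy infinity
manifold: along every solution, `ṽ·cos(λs̃) − ũ·sin(λs̃)` is constant. -/
theorem infinity_manifold_first_integral
    (lam : ℝ) (hlam : 0 < lam)
    (I : Set ℝ) (hI : I.OrdConnected)
    (v s u : ℝ → ℝ)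
    (hrange : ∀ σ ∈ I, s σ ∈ Set.Icc (-1 : ℝ) 1)
    (hv : ∀ σ ∈ I, HasDerivAt v ((1 - s σ ^ 2) * u σ ^ 2) σ)
    (hs : ∀ σ ∈ I, HasDerivAt s ((1 / lam) * (1 - s σ ^ 2) * u σ) σ)
    (hu : ∀ σ ∈ I, HasDerivAt u (-((1 - s σ ^ 2) * u σ * v σ)) σ) :
    ∀ σ₁ ∈ I, ∀ σ₂ ∈ I,
      v σ₁ * Real.cos (lam * s σ₁) - u σ₁ * Real.sin (lam * s σ₁)
        = v σ₂ * Real.cos (lam * s σ₂) - u σ₂ * Real.sin (lam * s σ₂) :=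
  infinity_manifold_first_integral_general lam hlam I hI v s u hv hs hu
end

section
/- Spectrum of the linearization at the 1+1+1 escape equilibria of the regularized positive-energy system (the computational core of Theorem 5.5): for every ṽ₀ ∈ ℝ and s̃₀ ∈ (−1,1), the point (R̃, ṽ, s̃, ũ) = (0, ṽ₀, s̃₀, 0) is an equilibrium of the regularized positive-energy system, and the Jacobian matrix of its vector field at this point has characteristic polynomial ξ²(ξ + (1 − s̃₀²)ṽ₀)², i.e. eigenvalue 0 with algebraic multiplicity 2 and eigenvalue −(1 − s̃₀²)ṽ₀ with algebraic multiplicity 2. In particular, for h > 0, at the equilibria (0, ±√(2h), s̃₀, 0) the nonzero eigenvalue ∓(1 − s̃₀²)√(2h) has algebraic multiplicity 2. -/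
/-!
At `R̃ = ũ = 0` the potential terms carry the factors `|R̃| ^ a` and `|R̃| ^ b`, which for
exponents `> 1` are differentiable with derivative `0` at the origin, so they contribute neither
to the equilibrium equations nor to the linearization. What survives is the diagonal entry
`-(1 - s̃₀²) ṽ₀` in the `R̃` and `ũ` rows and the single off-diagonal entry `∂s̃'/∂ũ`, so the
Jacobian is upper triangular with diagonal `(-(1 - s̃₀²) ṽ₀, 0, 0, -(1 - s̃₀²) ṽ₀)`.
-/

open Real Polynomial

@[fun_prop]
lemma DifferentiableAt.abs_rpow {f : ℝ → ℝ} {x p : ℝ} (hf : DifferentiableAt ℝ f x)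
    (hp : 1 < p) : DifferentiableAt ℝ (fun x => |f x| ^ p) x :=
  (hasDerivAt_abs_rpow (f x) hp).differentiableAt.comp x hf

lemma deriv_abs_rpow_zero {p : ℝ} (hp : 1 < p) : deriv (fun x : ℝ => |x| ^ p) 0 = 0 := by
  simpa using (hasDerivAt_abs_rpow 0 hp).deriv

section EscapeJacobian

variable {R : Type*} [CommRing R]

def escapeJacobian (c k : R) : Matrix (Fin 4) (Fin 4) R :=
  !![-c, 0, 0, 0; 0, 0, 0, 0; 0, 0, 0, k; 0, 0, 0, -c]

lemma escapeJacobian_isUpperTriangular (c k : R) : (escapeJacobian c k).IsUpperTriangular := by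
  intro i j hji
  fin_cases i <;> fin_cases j <;> simp_all [escapeJacobian]

lemma charpoly_escapeJacobian (c k : R) :
    (escapeJacobian c k).charpoly = X ^ 2 * (X + C c) ^ 2 := by
  rw [Matrix.charpoly_of_isUpperTriangular _ (escapeJacobian_isUpperTriangular c k)]
  simp [escapeJacobian, Fin.prod_univ_four]
  ring

end EscapeJacobian

theorem positive_energy_linearization_spectrum_general
    (a b : ℝ) (ha : 4 < a) (hab : a < b - 1)
    (lam : ℝ)
    (U V : ℝ → ℝ)
    (FR Fv Fs Fu : ℝ → ℝ → ℝ → ℝ → ℝ)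
    (hFR : ∀ R v s u : ℝ, FR R v s u = (2 * s / lam) * u * R - (1 - s ^ 2) * R * v)
    (hFv : ∀ R v s u : ℝ, Fv R v s u = (1 - s ^ 2) *
      (u ^ 2 - a * |R| ^ a * (1 - s ^ 2) ^ a * U s
        + b * |R| ^ b * (1 - s ^ 2) ^ b * V s))
    (hFs : ∀ R v s u : ℝ, Fs R v s u = (1 / lam) * (1 - s ^ 2) * u)
    (hFu : ∀ R v s u : ℝ, Fu R v s u = -((1 - s ^ 2) * u * v)
      + (1 / lam) * (|R| ^ a * (1 - s ^ 2) ^ (a + 1) * deriv U s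
        - |R| ^ b * (1 - s ^ 2) ^ (b + 1) * deriv V s))
    (v0 s0 : ℝ)
    (J : Matrix (Fin 4) (Fin 4) ℝ)
    (hJ : J = Matrix.of
      ![![deriv (fun R => FR R v0 s0 0) 0, deriv (fun v => FR 0 v s0 0) v0,
          deriv (fun s => FR 0 v0 s 0) s0, deriv (fun u => FR 0 v0 s0 u) 0],
        ![deriv (fun R => Fv R v0 s0 0) 0, deriv (fun v => Fv 0 v s0 0) v0,
          deriv (fun s => Fv 0 v0 s 0) s0, deriv (fun u => Fv 0 v0 s0 u) 0],
        ![deriv (fun R => Fs R v0 s0 0) 0, deriv (fun v => Fs 0 v s0 0) v0,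
          deriv (fun s => Fs 0 v0 s 0) s0, deriv (fun u => Fs 0 v0 s0 u) 0],
        ![deriv (fun R => Fu R v0 s0 0) 0, deriv (fun v => Fu 0 v s0 0) v0,
          deriv (fun s => Fu 0 v0 s 0) s0, deriv (fun u => Fu 0 v0 s0 u) 0]]) :
    (FR 0 v0 s0 0 = 0 ∧ Fv 0 v0 s0 0 = 0 ∧ Fs 0 v0 s0 0 = 0 ∧ Fu 0 v0 s0 0 = 0) ∧
    J.charpoly = X ^ 2 * (X + C ((1 - s0 ^ 2) * v0)) ^ 2 := by
  have ha1 : 1 < a := by linarith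
  have hb1 : 1 < b := by linarith
  have ha0 : (0 : ℝ) ^ a = 0 := zero_rpow (by linarith)
  have hb0 : (0 : ℝ) ^ b = 0 := zero_rpow (by linarith)
  have hJ' : J = escapeJacobian ((1 - s0 ^ 2) * v0) (1 / lam * (1 - s0 ^ 2)) := by
    rw [hJ, escapeJacobian]
    ext i j
    fin_cases i <;> fin_cases j <;>
      simp (disch := fun_prop (disch := assumption))
        [hFR, hFv, hFs, hFu, ha0, hb0, deriv_abs_rpow_zero ha1, deriv_abs_rpow_zero hb1]
  exact ⟨by simp [hFR, hFv, hFs, hFu, ha0, hb0], hJ' ▸ charpoly_escapeJacobian _ _⟩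

/-- Spectrum of the linearization at the 1+1+1 escape equilibria of
the regularized positive-energy system: `(0, ṽ₀, s̃₀, 0)` is an equilibrium and the
Jacobian there has characteristic polynomial `ξ²(ξ + (1 − s̃₀²)ṽ₀)²`, i.e.
eigenvalues `0` and `−(1 − s̃₀²)ṽ₀`, each of algebraic multiplicity 2. -/
theorem positive_energy_linearization_spectrum
    (a b : ℝ) (ha : 4 < a) (hab : a < b - 1)
    (lam : ℝ) (hlam : 0 < lam)
    (U V : ℝ → ℝ)
    (hUpos : ∀ s ∈ Set.Ioo (-1 : ℝ) 1, 0 < U s)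
    (hVpos : ∀ s ∈ Set.Ioo (-1 : ℝ) 1, 0 < V s)
    (hU1 : ContDiffOn ℝ 1 U (Set.Ioo (-1 : ℝ) 1))
    (hV1 : ContDiffOn ℝ 1 V (Set.Ioo (-1 : ℝ) 1))
    (FR Fv Fs Fu : ℝ → ℝ → ℝ → ℝ → ℝ)
    (hFR : ∀ R v s u : ℝ, FR R v s u = (2 * s / lam) * u * R - (1 - s ^ 2) * R * v)
    (hFv : ∀ R v s u : ℝ, Fv R v s u = (1 - s ^ 2) *
      (u ^ 2 - a * |R| ^ a * (1 - s ^ 2) ^ a * U s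
        + b * |R| ^ b * (1 - s ^ 2) ^ b * V s))
    (hFs : ∀ R v s u : ℝ, Fs R v s u = (1 / lam) * (1 - s ^ 2) * u)
    (hFu : ∀ R v s u : ℝ, Fu R v s u = -((1 - s ^ 2) * u * v)
      + (1 / lam) * (|R| ^ a * (1 - s ^ 2) ^ (a + 1) * deriv U s
        - |R| ^ b * (1 - s ^ 2) ^ (b + 1) * deriv V s))
    (v0 s0 : ℝ) (hs0 : s0 ∈ Set.Ioo (-1 : ℝ) 1)
    (J : Matrix (Fin 4) (Fin 4) ℝ)
    (hJ : J = Matrix.of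
      ![![deriv (fun R => FR R v0 s0 0) 0, deriv (fun v => FR 0 v s0 0) v0,
          deriv (fun s => FR 0 v0 s 0) s0, deriv (fun u => FR 0 v0 s0 u) 0],
        ![deriv (fun R => Fv R v0 s0 0) 0, deriv (fun v => Fv 0 v s0 0) v0,
          deriv (fun s => Fv 0 v0 s 0) s0, deriv (fun u => Fv 0 v0 s0 u) 0],
        ![deriv (fun R => Fs R v0 s0 0) 0, deriv (fun v => Fs 0 v s0 0) v0,
          deriv (fun s => Fs 0 v0 s 0) s0, deriv (fun u => Fs 0 v0 s0 u) 0],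
        ![deriv (fun R => Fu R v0 s0 0) 0, deriv (fun v => Fu 0 v s0 0) v0,
          deriv (fun s => Fu 0 v0 s 0) s0, deriv (fun u => Fu 0 v0 s0 u) 0]]) :
    (FR 0 v0 s0 0 = 0 ∧ Fv 0 v0 s0 0 = 0 ∧ Fs 0 v0 s0 0 = 0 ∧ Fu 0 v0 s0 0 = 0) ∧
    J.charpoly = X ^ 2 * (X + C ((1 - s0 ^ 2) * v0)) ^ 2 :=
  positive_energy_linearization_spectrum_general a b ha hab lam U V FR Fv Fs Fu hFR hFv hFs hFu v0
    s0 J hJ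
end
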